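/- arXiv:1406.7872 — 8 statements merged into one kernel-verified Lean document; each statement's English description precedes it below -/
import Mathlib

section
/- Shearer's lemma: Let F be a finite multiset of subsets of {1,…,n} such that every i ∈ {1,…,n} belongs to at least t members of F (t ≥ 1). Then for any random vector (X₁,…,Xₙ) of finitely-valued random variables, H(X₁,…,Xₙ) ≤ (1/t) Σ_{F∈𝓕} H(X_F), where X_F = (Xᵢ : i ∈ F). -/
/-!
The marginal entropy `S ↦ H(X_S)` is a monotone submodular set function vanishing at `∅`.
Submodularity is Gibbs' inequality comparing the law of `(X, Y, Z)` with that of the Markov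
chain `X → Y → Z` having the same `(X, Y)` and `(Y, Z)` marginals. Every such set function `f`
satisfies `t f(U) ≤ ∑_F f(F ∩ U)` when each point of `U` lies in at least `t` sets `F`: adding a
point `a` to `U` raises the left side by `t (f(U + a) - f(U))`, while by submodularity each of
the at least `t` terms with `a ∈ F` grows by at least `f(U + a) - f(U)`, and no term decreases.
-/

open Finset

/-- The probability that the random variable `X` takes value `x`, under the
probability mass function `μ` on the finite sample space `Ω`. -/
noncomputable def prOf {Ω α : Type*} [Fintype Ω] [DecidableEq α]
    (μ : Ω → ℝ) (X : Ω → α) (x : α) : ℝ :=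
  ∑ ω ∈ Finset.univ.filter (fun ω => X ω = x), μ ω

/-- The Shannon entropy (base-2) of the random variable `X`. -/
noncomputable def H2 {Ω α : Type*} [Fintype Ω] [Fintype α] [DecidableEq α]
    (μ : Ω → ℝ) (X : Ω → α) : ℝ :=
  ∑ x : α, -(prOf μ X x * Real.logb 2 (prOf μ X x))

/-- The conditional Shannon entropy `H(X|Y)`. -/
noncomputable def condH2 {Ω α β : Type*} [Fintype Ω] [Fintype α] [Fintype β]
    [DecidableEq α] [DecidableEq β] (μ : Ω → ℝ) (X : Ω → α) (Y : Ω → β) : ℝ :=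
  ∑ y : β, prOf μ Y y * ∑ x : α,
    -((prOf μ (fun ω => (X ω, Y ω)) (x, y) / prOf μ Y y) *
      Real.logb 2 (prOf μ (fun ω => (X ω, Y ω)) (x, y) / prOf μ Y y))

open Real

section Distribution
variable {Ω α β : Type*} [Fintype Ω] {μ : Ω → ℝ}

lemma prOf_nonneg [DecidableEq α] (hμ : ∀ ω, 0 ≤ μ ω) (X : Ω → α) (x : α) :
    0 ≤ prOf μ X x :=
  sum_nonneg fun ω _ => hμ ω

lemma sum_prOf [Fintype α] [DecidableEq α] (X : Ω → α) : ∑ x, prOf μ X x = ∑ ω, μ ω :=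
  sum_fiberwise_of_maps_to (fun _ _ => mem_univ _) _

lemma prOf_comp [Fintype α] [DecidableEq α] [DecidableEq β] (f : α → β) (X : Ω → α) (y : β) :
    prOf μ (fun ω => f (X ω)) y = ∑ x with f x = y, prOf μ X x := by
  unfold prOf
  rw [sum_fiberwise_eq_sum_filter]
  simp only [mem_filter, mem_univ, true_and]

lemma prOf_le_prOf_comp [Fintype α] [DecidableEq α] [DecidableEq β] (hμ : ∀ ω, 0 ≤ μ ω)
    (f : α → β) (X : Ω → α) (x : α) :
    prOf μ X x ≤ prOf μ (fun ω => f (X ω)) (f x) := by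
  rw [prOf_comp f X]
  exact single_le_sum (fun x' _ => prOf_nonneg hμ X x') (by simp)

lemma sum_prOf_prod_fst [Fintype α] [DecidableEq α] [DecidableEq β] (X : Ω → α) (Y : Ω → β)
    (y : β) : ∑ x, prOf μ (fun ω => (X ω, Y ω)) (x, y) = prOf μ Y y := by
  unfold prOf
  simp only [sum_filter]
  rw [sum_comm]
  refine sum_congr rfl fun ω _ => ?_
  simp [Prod.ext_iff, ite_and, eq_comm]

lemma sum_prOf_prod_snd [Fintype β] [DecidableEq α] [DecidableEq β] (X : Ω → α) (Y : Ω → β)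
    (x : α) : ∑ y, prOf μ (fun ω => (X ω, Y ω)) (x, y) = prOf μ X x := by
  unfold prOf
  simp only [sum_filter]
  rw [sum_comm]
  refine sum_congr rfl fun ω _ => ?_
  simp [Prod.ext_iff, ite_and, eq_comm]

end Distribution

section Entropy
variable {Ω α β γ : Type*} [Fintype Ω] {μ : Ω → ℝ}
  [Fintype α] [Fintype β] [Fintype γ] [DecidableEq α] [DecidableEq β] [DecidableEq γ]

lemma H2_comp_eq_sum (f : α → β) (X : Ω → α) :
    H2 μ (fun ω => f (X ω)) =
      ∑ x, -(prOf μ X x * logb 2 (prOf μ (fun ω => f (X ω)) (f x))) := by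
  unfold H2
  rw [← sum_fiberwise_of_maps_to (g := f) (fun _ _ => mem_univ _)]
  refine sum_congr rfl fun y _ => ?_
  have hfiber : ∀ x ∈ ({x | f x = y} : Finset α),
      -(prOf μ X x * logb 2 (prOf μ (fun ω => f (X ω)) (f x))) =
        -(prOf μ X x * logb 2 (prOf μ (fun ω => f (X ω)) y)) :=
    fun x hx => by rw [(mem_filter.1 hx).2]
  rw [sum_congr rfl hfiber, sum_neg_distrib, ← sum_mul, ← prOf_comp]

lemma H2_comp_le (hμ : ∀ ω, 0 ≤ μ ω) (f : α → β) (X : Ω → α) :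
    H2 μ (fun ω => f (X ω)) ≤ H2 μ X := by
  rw [H2_comp_eq_sum]
  refine sum_le_sum fun x _ => neg_le_neg ?_
  rcases (prOf_nonneg hμ X x).eq_or_lt with hx | hx
  · simp [← hx]
  · exact mul_le_mul_of_nonneg_left
      (logb_le_logb_of_le one_lt_two hx (prOf_le_prOf_comp hμ f X x)) hx.le

lemma H2_comp_eq (hμ : ∀ ω, 0 ≤ μ ω) {f : α → β} {g : β → α} (X : Ω → α)
    (hgf : ∀ ω, g (f (X ω)) = X ω) :
    H2 μ (fun ω => f (X ω)) = H2 μ X := by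
  refine le_antisymm (H2_comp_le hμ f X) ?_
  calc H2 μ X = H2 μ (fun ω => g (f (X ω))) := by simp only [hgf]
    _ ≤ H2 μ (fun ω => f (X ω)) := H2_comp_le hμ g _

lemma H2_of_subsingleton [Subsingleton α] (hμ1 : ∑ ω, μ ω = 1) (X : Ω → α) :
    H2 μ X = 0 := by
  refine sum_eq_zero fun x _ => ?_
  have hx : prOf μ X x = 1 := by
    rw [prOf, filter_true_of_mem fun ω _ => Subsingleton.elim _ _, hμ1]
  simp [hx]

end Entropy

lemma mul_log_div_le_sub {p q : ℝ} (hp : 0 ≤ p) (hq : 0 ≤ q) (hpq : p ≠ 0 → q ≠ 0) :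
    p * log (q / p) ≤ q - p := by
  rcases hp.eq_or_lt with rfl | hp
  · simpa using hq
  have hq := hq.lt_of_ne' (hpq hp.ne')
  calc p * log (q / p) ≤ p * (q / p - 1) :=
        mul_le_mul_of_nonneg_left (log_le_sub_one_of_pos (div_pos hq hp)) hp.le
    _ = q - p := by field_simp

lemma sum_mul_logb_div_nonpos {ι : Type*} [Fintype ι] {b : ℝ} (hb : 1 < b) {p q : ι → ℝ}
    (hp : ∀ i, 0 ≤ p i) (hq : ∀ i, 0 ≤ q i) (hpq : ∀ i, p i ≠ 0 → q i ≠ 0)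
    (hsum : ∑ i, q i ≤ ∑ i, p i) :
    ∑ i, p i * logb b (q i / p i) ≤ 0 := by
  have hlog : ∑ i, p i * log (q i / p i) ≤ 0 := by
    calc ∑ i, p i * log (q i / p i) ≤ ∑ i, (q i - p i) :=
          sum_le_sum fun i _ => mul_log_div_le_sub (hp i) (hq i) (hpq i)
      _ ≤ 0 := by rw [sum_sub_distrib]; linarith
  simp only [logb, mul_div_assoc', ← sum_div]
  exact div_nonpos_of_nonpos_of_nonneg hlog (log_nonneg hb.le)

section Submodularity
variable {Ω α β γ : Type*} [Fintype Ω] {μ : Ω → ℝ}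
  [Fintype α] [Fintype β] [Fintype γ] [DecidableEq α] [DecidableEq β] [DecidableEq γ]

lemma sum_prOf_mul_prOf_div_prOf (X : Ω → α) (Y : Ω → β) (Z : Ω → γ) :
    ∑ w : α × β × γ, prOf μ (fun ω => (X ω, Y ω)) (w.1, w.2.1) *
      prOf μ (fun ω => (Y ω, Z ω)) w.2 / prOf μ Y w.2.1 = ∑ ω, μ ω := by
  simp only [Fintype.sum_prod_type]
  rw [sum_comm]
  calc _ = ∑ y, (∑ x, prOf μ (fun ω => (X ω, Y ω)) (x, y)) *
        (∑ z, prOf μ (fun ω => (Y ω, Z ω)) (y, z)) / prOf μ Y y := by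
        simp only [sum_mul_sum, sum_div]
    _ = ∑ y, prOf μ Y y := by
        simp only [sum_prOf_prod_fst, sum_prOf_prod_snd, mul_self_div_self]
    _ = ∑ ω, μ ω := sum_prOf Y

theorem H2_submodular (hμ : ∀ ω, 0 ≤ μ ω) (X : Ω → α) (Y : Ω → β) (Z : Ω → γ) :
    H2 μ (fun ω => (X ω, Y ω, Z ω)) + H2 μ Y ≤
      H2 μ (fun ω => (X ω, Y ω)) + H2 μ (fun ω => (Y ω, Z ω)) := by
  have hXY := H2_comp_eq_sum (μ := μ) (fun w : α × β × γ => (w.1, w.2.1))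
    (fun ω => (X ω, Y ω, Z ω))
  have hYZ := H2_comp_eq_sum (μ := μ) (fun w : α × β × γ => w.2) (fun ω => (X ω, Y ω, Z ω))
  have hY := H2_comp_eq_sum (μ := μ) (fun w : α × β × γ => w.2.1) (fun ω => (X ω, Y ω, Z ω))
  set W := fun ω => (X ω, Y ω, Z ω)
  set P := prOf μ W
  set PXY := fun w : α × β × γ => prOf μ (fun ω => (X ω, Y ω)) (w.1, w.2.1)
  set PYZ := fun w : α × β × γ => prOf μ (fun ω => (Y ω, Z ω)) w.2
  set PY := fun w : α × β × γ => prOf μ Y w.2.1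
  have hpos : ∀ w, P w ≠ 0 → 0 < P w ∧ 0 < PXY w ∧ 0 < PYZ w ∧ 0 < PY w := fun w hw => by
    have hP := (prOf_nonneg hμ W w).lt_of_ne' hw
    exact ⟨hP, hP.trans_le (prOf_le_prOf_comp hμ (fun w => (w.1, w.2.1)) W w),
      hP.trans_le (prOf_le_prOf_comp hμ Prod.snd W w),
      hP.trans_le (prOf_le_prOf_comp hμ (fun w => w.2.1) W w)⟩
  have hgibbs := sum_mul_logb_div_nonpos one_lt_two (p := P)
    (q := fun w => PXY w * PYZ w / PY w) (prOf_nonneg hμ W)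
    (fun w => div_nonneg (mul_nonneg (prOf_nonneg hμ _ _) (prOf_nonneg hμ _ _))
      (prOf_nonneg hμ _ _))
    (fun w hw => by obtain ⟨-, h1, h2, h3⟩ := hpos w hw; positivity)
    (by rw [sum_prOf_mul_prOf_div_prOf, sum_prOf])
  have hterm : ∀ w, P w * logb 2 (PXY w * PYZ w / PY w / P w) =
      -(P w * logb 2 (P w)) + -(P w * logb 2 (PY w)) -
        (-(P w * logb 2 (PXY w)) + -(P w * logb 2 (PYZ w))) := fun w => by
    by_cases hw : P w = 0
    · simp [hw]
    obtain ⟨h0, h1, h2, h3⟩ := hpos w hw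
    rw [logb_div (by positivity) h0.ne', logb_div (by positivity) h3.ne',
      logb_mul h1.ne' h2.ne']
    ring
  simp only [hterm, sum_sub_distrib, sum_add_distrib] at hgibbs
  rw [hXY, hYZ, hY]
  exact sub_nonpos.1 hgibbs

end Submodularity

section Marginals
variable {Ω ι : Type*} [Fintype Ω] [DecidableEq ι] {α : ι → Type*} [∀ i, Fintype (α i)]
  [∀ i, DecidableEq (α i)] {μ : Ω → ℝ}

lemma H2_restrict_empty (hμ1 : ∑ ω, μ ω = 1) (X : Ω → ∀ i, α i) :
    H2 μ (fun ω => (∅ : Finset ι).restrict (X ω)) = 0 :=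
  H2_of_subsingleton hμ1 _

lemma H2_restrict_mono (hμ : ∀ ω, 0 ≤ μ ω) (X : Ω → ∀ i, α i) :
    Monotone fun S : Finset ι => H2 μ (fun ω => S.restrict (X ω)) :=
  fun _ T hST => H2_comp_le hμ (restrict₂ hST) (fun ω => T.restrict (X ω))

lemma H2_restrict_union_add_inter_le (hμ : ∀ ω, 0 ≤ μ ω) (X : Ω → ∀ i, α i)
    (S T : Finset ι) :
    H2 μ (fun ω => (S ∪ T).restrict (X ω)) + H2 μ (fun ω => (S ∩ T).restrict (X ω)) ≤
      H2 μ (fun ω => S.restrict (X ω)) + H2 μ (fun ω => T.restrict (X ω)) := by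
  have hS : H2 μ (fun ω => (S.restrict (X ω), (S ∩ T).restrict (X ω))) =
      H2 μ (fun ω => S.restrict (X ω)) :=
    H2_comp_eq hμ (f := fun x => (x, restrict₂ inter_subset_left x)) (g := Prod.fst)
      (fun ω => S.restrict (X ω)) fun _ => rfl
  have hT : H2 μ (fun ω => ((S ∩ T).restrict (X ω), T.restrict (X ω))) =
      H2 μ (fun ω => T.restrict (X ω)) :=
    H2_comp_eq hμ (f := fun x => (restrict₂ inter_subset_right x, x)) (g := Prod.snd)
      (fun ω => T.restrict (X ω)) fun _ => rfl
  have hST : H2 μ (fun ω => (S.restrict (X ω), (S ∩ T).restrict (X ω), T.restrict (X ω))) =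
      H2 μ (fun ω => (S ∪ T).restrict (X ω)) :=
    H2_comp_eq hμ
      (f := fun x => (restrict₂ subset_union_left x,
        restrict₂ (inter_subset_left.trans subset_union_left) x, restrict₂ subset_union_right x))
      (g := fun v i => if h : i.1 ∈ S then v.1 ⟨i, h⟩
        else v.2.2 ⟨i, (mem_union.1 i.2).resolve_left h⟩)
      (fun ω => (S ∪ T).restrict (X ω)) fun _ => by funext i; split_ifs <;> rfl
  have := H2_submodular hμ (fun ω => S.restrict (X ω)) (fun ω => (S ∩ T).restrict (X ω))
    (fun ω => T.restrict (X ω))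
  linarith

end Marginals

theorem mul_le_sum_inter_of_submodular {ι κ : Type*} [DecidableEq ι] [Fintype κ]
    {f : Finset ι → ℝ} (hf0 : f ∅ = 0) (hmono : Monotone f)
    (hsub : ∀ S T, f (S ∪ T) + f (S ∩ T) ≤ f S + f T) {F : κ → Finset ι} {t : ℕ}
    (U : Finset ι) (hcov : ∀ i ∈ U, t ≤ #{j | i ∈ F j}) :
    t * f U ≤ ∑ j, f (F j ∩ U) := by
  induction U using Finset.induction_on with
  | empty => simp [hf0]
  | insert a s ha ih =>
    have hgain : ∀ j, (if a ∈ F j then f (insert a s) - f s else 0) ≤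
        f (F j ∩ insert a s) - f (F j ∩ s) := by
      intro j
      split_ifs with haj
      · have := hsub (insert a (F j ∩ s)) s
        rw [insert_union, union_eq_right.2 inter_subset_right, insert_inter_of_notMem ha,
          inter_eq_left.2 inter_subset_right] at this
        rw [inter_insert_of_mem haj]
        linarith
      · rw [inter_insert_of_notMem haj, sub_self]
    have hcount : t * (f (insert a s) - f s) ≤
        ∑ j, if a ∈ F j then f (insert a s) - f s else 0 := by
      rw [sum_ite, sum_const_zero, add_zero, sum_const, nsmul_eq_mul]
      exact mul_le_mul_of_nonneg_right (by exact_mod_cast hcov a (mem_insert_self a s))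
        (sub_nonneg.2 (hmono (subset_insert a s)))
    have hs := ih fun i hi => hcov i (mem_insert_of_mem hi)
    have hsum := sum_le_sum fun j (_ : j ∈ univ) => hgain j
    rw [sum_sub_distrib] at hsum
    linarith

theorem mul_le_sum_of_submodular {ι κ : Type*} [Fintype ι] [DecidableEq ι] [Fintype κ]
    {f : Finset ι → ℝ} (hf0 : f ∅ = 0) (hmono : Monotone f)
    (hsub : ∀ S T, f (S ∪ T) + f (S ∩ T) ≤ f S + f T) {F : κ → Finset ι} {t : ℕ}
    (hcov : ∀ i, t ≤ #{j | i ∈ F j}) :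
    t * f univ ≤ ∑ j, f (F j) := by
  simpa only [inter_univ] using
    mul_le_sum_inter_of_submodular hf0 hmono hsub univ fun i _ => hcov i

/-- Shearer's lemma: if each coordinate `i ∈ [n]` is covered at least `t ≥ 1` times by
the (multi)family `F`, then `H(X₁,…,Xₙ) ≤ (1/t) Σ_{F∈𝓕} H(X_F)`. -/
theorem shearer {Ω : Type*} [Fintype Ω] {n m t : ℕ} (ht : 1 ≤ t)
    (F : Fin m → Finset (Fin n))
    (hcov : ∀ i : Fin n, t ≤ (Finset.univ.filter (fun j => i ∈ F j)).card)
    {α : Fin n → Type*} [∀ i, Fintype (α i)] [∀ i, DecidableEq (α i)]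
    (μ : Ω → ℝ) (hnn : ∀ ω, 0 ≤ μ ω) (hsum : ∑ ω, μ ω = 1)
    (X : ∀ i, Ω → α i) :
    H2 μ (fun ω => fun i => X i ω) ≤
      (1 / (t : ℝ)) * ∑ j : Fin m, H2 μ (fun ω => fun i : {i // i ∈ F j} => X i ω) := by
  have hshearer := mul_le_sum_of_submodular
    (f := fun S : Finset (Fin n) => H2 μ (fun ω => S.restrict (fun i => X i ω)))
    (H2_restrict_empty hsum _) (H2_restrict_mono hnn _) (H2_restrict_union_add_inter_le hnn _)
    hcov
  have huniv : H2 μ (fun ω => (univ : Finset (Fin n)).restrict (fun i => X i ω)) =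
      H2 μ (fun ω i => X i ω) :=
    H2_comp_eq hnn (g := fun v i => v ⟨i, mem_univ i⟩) (fun ω i => X i ω) fun _ => rfl
  rw [huniv] at hshearer
  rw [one_div, inv_mul_eq_div, le_div_iff₀ (by exact_mod_cast ht), mul_comm]
  exact hshearer
end

section
/- Combinatorial Shearer's lemma: Let 𝓕 be a finite multiset of subsets of {1,…,n} with each i ∈ {1,…,n} contained in at least t members of 𝓕 (t ≥ 1), and let 𝓐 be a family of subsets of {1,…,n}. Then |𝓐|ᵗ ≤ Π_{F∈𝓕} |trace_F(𝓐)|, where trace_F(𝓐) = {A ∩ F : A ∈ 𝓐}. -/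
/-!
Split `𝒜` along an element `a` into `𝒜₀`, the sets avoiding `a`, and `𝒜₁`, the sets containing `a`
with `a` removed, so that `|𝒜| = |𝒜₀| + |𝒜₁|`. On every `F ∋ a` the trace splits the same way,
`|tr_F 𝒜| = |tr_F 𝒜₀| + |tr_F 𝒜₁|`, while on every `F` both subfamilies have traces no larger than
that of `𝒜`. Induction on the family then reduces the theorem, over `t` members of the cover that
contain `a`, to the superadditivity of the geometric mean of `t` numbers,
`(∏ uᵢ)^(1/t) + (∏ vᵢ)^(1/t) ≤ (∏ (uᵢ + vᵢ))^(1/t)`, which is AM–GM.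
-/

open Finset
open scoped NNReal

theorem NNReal.geom_mean_add_geom_mean_le {ι : Type*} {s : Finset ι} (hs : s.Nonempty)
    (u v : ι → ℝ≥0) :
    (∏ i ∈ s, u i) ^ (#s : ℝ)⁻¹ + (∏ i ∈ s, v i) ^ (#s : ℝ)⁻¹ ≤
      (∏ i ∈ s, (u i + v i)) ^ (#s : ℝ)⁻¹ := by
  set w : ℝ := (#s : ℝ)⁻¹
  have hw : w ≠ 0 := inv_ne_zero (Nat.cast_ne_zero.2 hs.card_pos.ne')
  by_cases hzero : ∃ i ∈ s, u i + v i = 0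
  · obtain ⟨i, hi, hi0⟩ := hzero
    obtain ⟨hu, hv⟩ := add_eq_zero.1 hi0
    simp [prod_eq_zero hi hu, prod_eq_zero hi hv, NNReal.zero_rpow hw]
  push Not at hzero
  have hW : 0 < (∏ i ∈ s, (u i + v i)) ^ w :=
    NNReal.rpow_pos (prod_pos fun i hi => pos_iff_ne_zero.2 (hzero i hi))
  have hweights : ∑ _i ∈ s, (#s : ℝ≥0)⁻¹ = 1 := by
    rw [sum_const, nsmul_eq_mul, mul_inv_cancel₀ (Nat.cast_ne_zero.2 hs.card_pos.ne')]
  -- AM-GM applied to the fractions `u i / (u i + v i)` and `v i / (u i + v i)`, which sum to `1`.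
  have amgm (f : ι → ℝ≥0) :
      (∏ i ∈ s, f i) ^ w / (∏ i ∈ s, (u i + v i)) ^ w ≤
        ∑ i ∈ s, (#s : ℝ≥0)⁻¹ * (f i / (u i + v i)) := by
    rw [← NNReal.div_rpow, ← prod_div_distrib, ← NNReal.finsetProd_rpow]
    convert NNReal.geom_mean_le_arith_mean_weighted s (fun _ => (#s : ℝ≥0)⁻¹) _ hweights
    simp [w]
  have hsum : ∑ i ∈ s, (#s : ℝ≥0)⁻¹ * (u i / (u i + v i)) +
      ∑ i ∈ s, (#s : ℝ≥0)⁻¹ * (v i / (u i + v i)) = 1 := by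
    rw [← sum_add_distrib, ← hweights]
    refine sum_congr rfl fun i hi => ?_
    rw [← mul_add, ← add_div, div_self (hzero i hi), mul_one]
  have := (add_le_add (amgm u) (amgm v)).trans hsum.le
  rwa [← add_div, div_le_one hW] at this

theorem Nat.add_pow_card_le_mul_prod_add {ι : Type*} {s : Finset ι} (hs : s.Nonempty)
    {K P Q : ℕ} {u v : ι → ℕ} (hP : P ^ #s ≤ K * ∏ i ∈ s, u i)
    (hQ : Q ^ #s ≤ K * ∏ i ∈ s, v i) :
    (P + Q) ^ #s ≤ K * ∏ i ∈ s, (u i + v i) := by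
  have hpos : (0 : ℝ) < #s := Nat.cast_pos.2 hs.card_pos
  have le_root {x y : ℝ≥0} (h : x ^ #s ≤ y) : x ≤ y ^ (#s : ℝ)⁻¹ := by
    rwa [NNReal.le_rpow_inv_iff hpos, NNReal.rpow_natCast]
  have hP' : (P : ℝ≥0) ≤ (K : ℝ≥0) ^ (#s : ℝ)⁻¹ * (∏ i ∈ s, (u i : ℝ≥0)) ^ (#s : ℝ)⁻¹ := by
    rw [← NNReal.mul_rpow]; exact le_root (by exact_mod_cast hP)
  have hQ' : (Q : ℝ≥0) ≤ (K : ℝ≥0) ^ (#s : ℝ)⁻¹ * (∏ i ∈ s, (v i : ℝ≥0)) ^ (#s : ℝ)⁻¹ := by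
    rw [← NNReal.mul_rpow]; exact le_root (by exact_mod_cast hQ)
  have key : ((P + Q : ℕ) : ℝ≥0) ≤ ((K : ℝ≥0) * ∏ i ∈ s, ((u i : ℝ≥0) + v i)) ^ (#s : ℝ)⁻¹ := by
    rw [NNReal.mul_rpow, Nat.cast_add]
    calc (P : ℝ≥0) + Q ≤ (K : ℝ≥0) ^ (#s : ℝ)⁻¹ * ((∏ i ∈ s, (u i : ℝ≥0)) ^ (#s : ℝ)⁻¹ +
          (∏ i ∈ s, (v i : ℝ≥0)) ^ (#s : ℝ)⁻¹) := by
            rw [mul_add]; gcongr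
      _ ≤ _ := by gcongr; exact NNReal.geom_mean_add_geom_mean_le hs _ _
  rw [NNReal.le_rpow_inv_iff hpos, NNReal.rpow_natCast] at key
  exact_mod_cast key

namespace Finset

variable {α : Type*} [DecidableEq α]

def trace (𝒜 : Finset (Finset α)) (F : Finset α) : Finset (Finset α) :=
  𝒜.image (· ∩ F)

section

variable {𝒜 : Finset (Finset α)} {F : Finset α} {a : α}

theorem nonMemberSubfamily_trace (ha : a ∈ F) :
    (𝒜.nonMemberSubfamily a).trace F = (𝒜.trace F).nonMemberSubfamily a := by
  ext C
  simp only [trace, mem_image, mem_nonMemberSubfamily]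
  constructor
  · rintro ⟨A, ⟨hA, haA⟩, rfl⟩
    exact ⟨⟨A, hA, rfl⟩, fun h => haA (mem_inter.1 h).1⟩
  · rintro ⟨⟨A, hA, rfl⟩, haAF⟩
    exact ⟨A, ⟨hA, fun haA => haAF (mem_inter.2 ⟨haA, ha⟩)⟩, rfl⟩

theorem memberSubfamily_trace (ha : a ∈ F) :
    (𝒜.memberSubfamily a).trace F = (𝒜.trace F).memberSubfamily a := by
  ext C
  simp only [trace, mem_image, mem_memberSubfamily]
  constructor
  · rintro ⟨B, ⟨hB, haB⟩, rfl⟩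
    exact ⟨⟨insert a B, hB, insert_inter_of_mem ha⟩, fun h => haB (mem_inter.1 h).1⟩
  · rintro ⟨⟨A, hA, hAC⟩, haC⟩
    have haA : a ∈ A := (mem_inter.1 (hAC ▸ mem_insert_self a C)).1
    refine ⟨A.erase a, ⟨by rwa [insert_erase haA], notMem_erase a A⟩, ?_⟩
    rw [erase_inter, hAC, erase_insert haC]

theorem card_trace_memberSubfamily_add_card_trace_nonMemberSubfamily (ha : a ∈ F) :
    #((𝒜.memberSubfamily a).trace F) + #((𝒜.nonMemberSubfamily a).trace F) = #(𝒜.trace F) := by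
  rw [memberSubfamily_trace ha, nonMemberSubfamily_trace ha,
    card_memberSubfamily_add_card_nonMemberSubfamily]

theorem card_trace_nonMemberSubfamily_le :
    #((𝒜.nonMemberSubfamily a).trace F) ≤ #(𝒜.trace F) :=
  card_le_card (image_subset_image (filter_subset _ _))

theorem card_trace_memberSubfamily_le :
    #((𝒜.memberSubfamily a).trace F) ≤ #(𝒜.trace F) := by
  refine (card_le_card fun C hC => ?_).trans (card_image_le (f := (erase · a)))
  obtain ⟨B, hB, rfl⟩ := mem_image.1 hC
  obtain ⟨hB𝒜, haB⟩ := mem_memberSubfamily.1 hB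
  exact mem_image.2 ⟨insert a B ∩ F, mem_image_of_mem _ hB𝒜, by
    rw [← erase_inter, erase_insert haB]⟩

end

variable {ι : Type*} [Fintype ι] {𝒜 : Finset (Finset α)} {F : ι → Finset α} {a : α} {t : ℕ}

theorem card_pow_le_prod_card_trace_of_subfamilies (ht : 0 < t) (ha : t ≤ #{j | a ∈ F j})
    (h₁ : #(𝒜.memberSubfamily a) ^ t ≤ ∏ j, #((𝒜.memberSubfamily a).trace (F j)))
    (h₀ : #(𝒜.nonMemberSubfamily a) ^ t ≤ ∏ j, #((𝒜.nonMemberSubfamily a).trace (F j))) :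
    #𝒜 ^ t ≤ ∏ j, #(𝒜.trace (F j)) := by
  classical
  obtain ⟨S, hSa, rfl⟩ := exists_subset_card_eq ha
  have haS : ∀ j ∈ S, a ∈ F j := fun j hj => (mem_filter.1 (hSa hj)).2
  set K := ∏ j ∈ Sᶜ, #(𝒜.trace (F j))
  have bound (ℬ : Finset (Finset α)) (hℬ : ∀ j, #(ℬ.trace (F j)) ≤ #(𝒜.trace (F j)))
      (h : #ℬ ^ #S ≤ ∏ j, #(ℬ.trace (F j))) : #ℬ ^ #S ≤ K * ∏ j ∈ S, #(ℬ.trace (F j)) := by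
    refine h.trans ?_
    rw [← prod_mul_prod_compl S, mul_comm]
    exact Nat.mul_le_mul_right _ (prod_le_prod' fun j _ => hℬ j)
  rw [← card_memberSubfamily_add_card_nonMemberSubfamily a 𝒜]
  calc (#(𝒜.memberSubfamily a) + #(𝒜.nonMemberSubfamily a)) ^ #S
      ≤ K * ∏ j ∈ S, (#((𝒜.memberSubfamily a).trace (F j)) +
          #((𝒜.nonMemberSubfamily a).trace (F j))) :=
        Nat.add_pow_card_le_mul_prod_add (card_pos.1 ht)
          (bound _ (fun _ => card_trace_memberSubfamily_le) h₁)
          (bound _ (fun _ => card_trace_nonMemberSubfamily_le) h₀)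
    _ = K * ∏ j ∈ S, #(𝒜.trace (F j)) := by
        rw [prod_congr rfl fun j hj =>
          card_trace_memberSubfamily_add_card_trace_nonMemberSubfamily (haS j hj)]
    _ = ∏ j, #(𝒜.trace (F j)) := (mul_comm _ _).trans (prod_mul_prod_compl S _)

theorem card_pow_le_prod_card_trace (ht : 0 < t) (hcov : ∀ a, t ≤ #{j | a ∈ F j})
    (𝒜 : Finset (Finset α)) : #𝒜 ^ t ≤ ∏ j, #(𝒜.trace (F j)) := by
  induction 𝒜 using memberFamily_induction_on with
  | empty => simp [zero_pow ht.ne']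
  | singleton_empty => simp [trace]
  | subfamily a h₀ h₁ => exact card_pow_le_prod_card_trace_of_subfamilies ht (hcov a) h₁ h₀

end Finset

/-- Combinatorial Shearer's lemma: if every `i ∈ [n]` lies in at least `t ≥ 1` members of
the (multi)family `F`, then `|𝓐|ᵗ ≤ Π_{F∈𝓕} |trace_F(𝓐)|`. -/
theorem combinatorial_shearer {n m t : ℕ} (ht : 1 ≤ t)
    (F : Fin m → Finset (Fin n))
    (hcov : ∀ i : Fin n, t ≤ (Finset.univ.filter (fun j => i ∈ F j)).card)
    (𝓐 : Finset (Finset (Fin n))) :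
    𝓐.card ^ t ≤ ∏ j : Fin m, (𝓐.image (fun A => A ∩ F j)).card :=
  card_pow_le_prod_card_trace ht hcov 𝓐
end

section
/- There exists a constant C > 0 such that for all positive integers m, Σ_{j=0}^{m} C(m,j) 2^{-m} log₂(2^m / C(m,j)) ≤ (log₂ m)/2 + C. -/
/-!
Gibbs' inequality bounds the entropy of `p j = C(m,j) / 2^m` by the cross entropy
`∑ p j * log (Z / w j)` against the Cauchy-type weights `w j = m / (m + (2j - m)^2)`,
`Z = ∑ w j`. Since `log (Z / w j) = log Z + log (1 + (2j - m)^2 / m) ≤ log Z + (2j - m)^2 / m`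
and the binomial variance identity `∑ C(m,j) (2j - m)^2 = m 2^m` holds, the entropy is at most
`log Z + 1` nats. Finally `Z = O(√m)`: terms with `|2j - m| ≤ √m` are at most `1`, the others are
at most `m / (2j - m)^2`, and `∑_{d > √m} 1 / d^2 = O(1 / √m)`.
-/

open Finset

theorem Real.sum_mul_log_inv_le_sum_mul_log_div {ι : Type*} {s : Finset ι} {p w : ι → ℝ}
    (hp : ∀ i ∈ s, 0 ≤ p i) (hp_sum : ∑ i ∈ s, p i = 1) (hw : ∀ i ∈ s, 0 < w i) :
    ∑ i ∈ s, p i * Real.log (p i)⁻¹ ≤ ∑ i ∈ s, p i * Real.log ((∑ j ∈ s, w j) / w i) := by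
  set Z := ∑ j ∈ s, w j
  have hZ : 0 < Z :=
    sum_pos hw (nonempty_of_sum_ne_zero (f := p) (by rw [hp_sum]; exact one_ne_zero))
  have key : ∀ i ∈ s, p i * Real.log (p i)⁻¹ ≤ p i * Real.log (Z / w i) + (w i / Z - p i) := by
    intro i hi
    rcases (hp i hi).eq_or_lt with hpi | hpi
    · rw [← hpi]; simpa using (div_pos (hw i hi) hZ).le
    · have hx : 0 < w i / (Z * p i) := div_pos (hw i hi) (mul_pos hZ hpi)
      have hsplit : Real.log (p i)⁻¹ = Real.log (Z / w i) + Real.log (w i / (Z * p i)) := by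
        rw [← Real.log_mul (div_pos hZ (hw i hi)).ne' hx.ne']
        congr 1
        field_simp [(hw i hi).ne']
      rw [hsplit, mul_add]
      calc _ ≤ p i * Real.log (Z / w i) + p i * (w i / (Z * p i) - 1) := by
            gcongr; exact Real.log_le_sub_one_of_pos hx
        _ = _ := by field_simp
  calc ∑ i ∈ s, p i * Real.log (p i)⁻¹
      ≤ ∑ i ∈ s, (p i * Real.log (Z / w i) + (w i / Z - p i)) := sum_le_sum key
    _ = ∑ i ∈ s, p i * Real.log (Z / w i) := by
      rw [sum_add_distrib, sum_sub_distrib, ← sum_div, div_self hZ.ne', hp_sum, sub_self,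
        add_zero]

theorem sum_range_succ_choose_smul {M : Type*} [AddCommMonoid M] (f : ℕ → M) (m : ℕ) :
    ∑ j ∈ range (m + 2), (m + 1).choose j • f j =
      ∑ j ∈ range (m + 1), m.choose j • (f j + f (j + 1)) := by
  calc ∑ j ∈ range (m + 2), (m + 1).choose j • f j
      = ∑ j ∈ range (m + 1), m.choose j • f (j + 1) +
          (∑ j ∈ range (m + 1), m.choose (j + 1) • f (j + 1) + m.choose 0 • f 0) := by
        simp [sum_range_succ' _ (m + 1), Nat.choose_succ_succ', add_smul, sum_add_distrib,
          add_assoc]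
    _ = ∑ j ∈ range (m + 1), m.choose j • f (j + 1) + ∑ j ∈ range (m + 2), m.choose j • f j := by
        rw [sum_range_succ' _ (m + 1)]
    _ = ∑ j ∈ range (m + 1), m.choose j • (f j + f (j + 1)) := by
        rw [sum_range_succ (fun j => m.choose j • f j) (m + 1), Nat.choose_succ_self, zero_smul,
          add_zero, add_comm]
        simp only [smul_add, sum_add_distrib]

theorem sum_range_choose_mul_two_mul_sub_sq {R : Type*} [CommRing R] (m : ℕ) :
    ∑ j ∈ range (m + 1), (m.choose j : R) * (2 * j - m) ^ 2 = (m : R) * 2 ^ m := by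
  induction m with
  | zero => simp
  | succ m ih =>
    have hsq (j : ℕ) :
        (2 * (j : R) - (m + 1 : ℕ)) ^ 2 + (2 * ((j + 1 : ℕ) : R) - (m + 1 : ℕ)) ^ 2 =
          2 * (2 * j - m) ^ 2 + 2 := by
      push_cast; ring
    have hsum : ∑ j ∈ range (m + 1), (m.choose j : R) = 2 ^ m := by
      rw [← Nat.cast_sum, Nat.sum_range_choose, Nat.cast_pow, Nat.cast_ofNat]
    calc ∑ j ∈ range (m + 2), ((m + 1).choose j : R) * (2 * j - (m + 1 : ℕ)) ^ 2
        = ∑ j ∈ range (m + 1), (m.choose j : R) * (2 * (2 * j - m) ^ 2 + 2) := by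
          have := sum_range_succ_choose_smul (fun j => (2 * (j : R) - (m + 1 : ℕ)) ^ 2) m
          simp only [nsmul_eq_mul] at this
          rw [this]
          exact sum_congr rfl fun j _ => by rw [hsq]
      _ = 2 * ∑ j ∈ range (m + 1), (m.choose j : R) * (2 * j - m) ^ 2 +
            2 * ∑ j ∈ range (m + 1), (m.choose j : R) := by
          rw [mul_sum, mul_sum, ← sum_add_distrib]
          exact sum_congr rfl fun j _ => by ring
      _ = ((m + 1 : ℕ) : R) * 2 ^ (m + 1) := by
          rw [ih, hsum]; push_cast; ring

theorem sum_range_natAbs_two_mul_sub_le {M : Type*} [AddCommMonoid M] [PartialOrder M]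
    [IsOrderedAddMonoid M] {f : ℕ → M} (hf : ∀ d, 0 ≤ f d) (m : ℕ) :
    ∑ j ∈ range (m + 1), f (2 * j - m : ℤ).natAbs ≤ 2 • ∑ d ∈ range (m + 1), f d := by
  have hfiber (d : ℕ) :
      ((range (m + 1)).filter fun j : ℕ => (2 * j - m : ℤ).natAbs = d).card ≤ 2 := by
    refine (card_le_card fun j hj => ?_).trans (card_le_two (a := (m + d) / 2) (b := (m - d) / 2))
    simp only [mem_filter, mem_range, mem_insert, mem_singleton] at hj ⊢
    omega
  have himage : (range (m + 1)).image (fun j : ℕ => (2 * j - m : ℤ).natAbs) ⊆ range (m + 1) := by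
    intro d hd
    simp only [mem_image, mem_range] at hd ⊢
    omega
  rw [sum_comp, smul_sum]
  calc _ ≤ ∑ d ∈ (range (m + 1)).image (fun j : ℕ => (2 * j - m : ℤ).natAbs), 2 • f d :=
        sum_le_sum fun d _ => nsmul_le_nsmul_left (hf d) (hfiber d)
    _ ≤ ∑ d ∈ range (m + 1), 2 • f d :=
        sum_le_sum_of_subset_of_nonneg himage fun d _ _ => nsmul_nonneg (hf d) 2

theorem sum_range_div_add_sq_le (n : ℕ) {m : ℕ} (hm : 0 < m) :
    ∑ d ∈ range n, (m : ℝ) / (m + d ^ 2) ≤ 4 * √m := by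
  set s := Nat.sqrt m
  have hs : (s : ℝ) ≤ √m := Real.nat_sqrt_le_real_sqrt
  have hs' : √m < s + 1 := Real.real_sqrt_lt_nat_sqrt_succ
  have hone : 1 ≤ √m := Real.one_le_sqrt.mpr (by exact_mod_cast hm)
  have hm_sqrt : (m : ℝ) = √m * √m := (Real.mul_self_sqrt (Nat.cast_nonneg m)).symm
  calc ∑ d ∈ range n, (m : ℝ) / (m + d ^ 2)
      ≤ ∑ d ∈ range (s + 1) ∪ Ioo s n, (m : ℝ) / (m + d ^ 2) := by
        refine sum_le_sum_of_subset_of_nonneg (fun d hd => ?_) fun d _ _ => by positivity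
        simp only [mem_union, mem_range, mem_Ioo] at hd ⊢
        omega
    _ = ∑ d ∈ range (s + 1), (m : ℝ) / (m + d ^ 2) + ∑ d ∈ Ioo s n, (m : ℝ) / (m + d ^ 2) :=
        sum_union <| disjoint_left.mpr fun d hd hd' => by
          simp only [mem_range, mem_Ioo] at hd hd'; omega
    _ ≤ ∑ d ∈ range (s + 1), 1 + ∑ d ∈ Ioo s n, (m : ℝ) * (d ^ 2 : ℝ)⁻¹ := by
        gcongr with d _ d hd
        · exact div_le_one_of_le₀ (by simp) (by positivity)
        · have : 0 < d := (Nat.zero_le s).trans_lt (mem_Ioo.mp hd).1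
          rw [← div_eq_mul_inv]
          gcongr
          simp
    _ ≤ (s + 1) + m * (2 / (s + 1)) := by
        rw [sum_const, card_range, nsmul_one, ← mul_sum]
        push_cast
        gcongr
        exact sum_Ioo_inv_sq_le s n
    _ ≤ 4 * √m := by
        have : (m : ℝ) * (2 / (s + 1)) ≤ 2 * √m := by
          rw [mul_div_assoc', div_le_iff₀ (by positivity)]
          nlinarith
        linarith

theorem sum_range_div_add_two_mul_sub_sq_le {m : ℕ} (hm : 0 < m) :
    ∑ j ∈ range (m + 1), (m : ℝ) / (m + (2 * j - m) ^ 2) ≤ 8 * √m := by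
  have hsq (j : ℕ) : ((2 * j - m : ℤ).natAbs : ℝ) ^ 2 = (2 * j - m) ^ 2 := by
    rw [Nat.cast_natAbs, Int.cast_abs, sq_abs]
    push_cast; ring
  calc ∑ j ∈ range (m + 1), (m : ℝ) / (m + (2 * j - m) ^ 2)
      = ∑ j ∈ range (m + 1), (m : ℝ) / (m + ((2 * j - m : ℤ).natAbs : ℝ) ^ 2) := by
        simp only [hsq]
    _ ≤ 2 • ∑ d ∈ range (m + 1), (m : ℝ) / (m + d ^ 2) :=
        sum_range_natAbs_two_mul_sub_le (f := fun d : ℕ => (m : ℝ) / (m + d ^ 2))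
          (fun d => by positivity) m
    _ ≤ 8 * √m := by
        rw [nsmul_eq_mul]
        linarith [sum_range_div_add_sq_le (m + 1) hm]

theorem sum_choose_div_two_pow_mul_log_le {m : ℕ} (hm : 0 < m) :
    ∑ j ∈ range (m + 1), (m.choose j : ℝ) / 2 ^ m * Real.log (2 ^ m / m.choose j) ≤
      Real.log (∑ j ∈ range (m + 1), (m : ℝ) / (m + (2 * j - m) ^ 2)) + 1 := by
  set Z := ∑ j ∈ range (m + 1), (m : ℝ) / (m + (2 * j - m) ^ 2)
  have hmR : (0 : ℝ) < m := by exact_mod_cast hm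
  have hchoose_sum : ∑ j ∈ range (m + 1), (m.choose j : ℝ) = 2 ^ m := by
    rw [← Nat.cast_sum, Nat.sum_range_choose, Nat.cast_pow, Nat.cast_ofNat]
  have hp_sum : ∑ j ∈ range (m + 1), (m.choose j : ℝ) / 2 ^ m = 1 := by
    rw [← sum_div, hchoose_sum, div_self (by positivity)]
  have hZ : 0 < Z := sum_pos (fun j _ => by positivity) nonempty_range_add_one
  have hlog (j : ℕ) : Real.log (Z / (m / (m + (2 * j - m) ^ 2))) ≤
      Real.log Z + (2 * j - m) ^ 2 / m := by
    have hx : 0 < 1 + (2 * j - m : ℝ) ^ 2 / m := by positivity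
    rw [div_div_eq_mul_div, mul_div_assoc, add_div, div_self hmR.ne', Real.log_mul hZ.ne' hx.ne']
    linarith [Real.log_le_sub_one_of_pos hx]
  calc ∑ j ∈ range (m + 1), (m.choose j : ℝ) / 2 ^ m * Real.log (2 ^ m / m.choose j)
      = ∑ j ∈ range (m + 1),
          (m.choose j : ℝ) / 2 ^ m * Real.log ((m.choose j : ℝ) / 2 ^ m)⁻¹ := by
        simp only [inv_div]
    _ ≤ ∑ j ∈ range (m + 1),
          (m.choose j : ℝ) / 2 ^ m * Real.log (Z / (m / (m + (2 * j - m) ^ 2))) :=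
        Real.sum_mul_log_inv_le_sum_mul_log_div (fun j _ => by positivity) hp_sum
          fun j _ => by positivity
    _ ≤ ∑ j ∈ range (m + 1), (m.choose j : ℝ) / 2 ^ m * (Real.log Z + (2 * j - m) ^ 2 / m) := by
        gcongr with j; exact hlog j
    _ = Real.log Z + 1 := by
        simp only [mul_add, sum_add_distrib, ← sum_mul, hp_sum, one_mul, add_right_inj]
        simp only [div_mul_div_comm, ← sum_div, sum_range_choose_mul_two_mul_sub_sq]
        field_simp

/-- The entropy of a binomial(m, 1/2) random variable is at most `(log₂ m)/2 + C`
for some absolute constant `C > 0`. -/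
theorem binomial_entropy_bound :
    ∃ C : ℝ, 0 < C ∧ ∀ m : ℕ, 0 < m →
      ∑ j ∈ Finset.range (m + 1),
        ((m.choose j : ℝ) / 2 ^ m) * Real.logb 2 ((2 : ℝ) ^ m / (m.choose j : ℝ)) ≤
        Real.logb 2 m / 2 + C := by
  have hlog2 : 0 < Real.log 2 := Real.log_pos one_lt_two
  refine ⟨3 + (Real.log 2)⁻¹, by positivity, fun m hm => ?_⟩
  have hmR : (0 : ℝ) < m := by exact_mod_cast hm
  have hZ : 0 < ∑ j ∈ range (m + 1), (m : ℝ) / (m + (2 * j - m) ^ 2) :=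
    sum_pos (fun j _ => by positivity) nonempty_range_add_one
  calc ∑ j ∈ range (m + 1), (m.choose j : ℝ) / 2 ^ m * Real.logb 2 (2 ^ m / m.choose j)
      = (∑ j ∈ range (m + 1), (m.choose j : ℝ) / 2 ^ m * Real.log (2 ^ m / m.choose j)) /
          Real.log 2 := by
        simp only [Real.logb, mul_div_assoc', sum_div]
    _ ≤ (Real.log (8 * √m) + 1) / Real.log 2 := by
        gcongr
        exact (sum_choose_div_two_pow_mul_log_le hm).trans
          (by gcongr; exact sum_range_div_add_two_mul_sub_sq_le hm)
    _ = Real.logb 2 m / 2 + (3 + (Real.log 2)⁻¹) := by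
        rw [Real.log_mul (by norm_num) (Real.sqrt_pos.mpr hmR).ne', Real.log_sqrt hmR.le,
          show (8 : ℝ) = 2 ^ 3 by norm_num, Real.log_pow, Real.logb]
        field_simp
        ring
end

section
/- Discrete Loomis-Whitney: Let B be a finite subset of ℤⁿ (n ≥ 2), and for j ∈ {1,…,n} let B_j ⊆ ℤ^{n-1} be the projection of B obtained by deleting the j-th coordinate. Then |B|^{n-1} ≤ Π_{j=1}^{n} |B_j|. -/
/-!
Induction on the dimension. Slice `B` along a coordinate `j₀` into the fibres
`Bᵗ = {x ∈ B | x j₀ = t}`, viewed in the remaining `n` coordinates. Each fibre lies in `B_{j₀}`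
and satisfies the inequality one dimension down, so `|Bᵗ|ⁿ ≤ |B_{j₀}| ∏ₖ |Bᵗₖ|`. For each `k ≠ j₀`
the sets `Bᵗₖ` embed disjointly (tagged by `t`) into `Bₖ`, and Hölder's inequality with all
exponents `1/n` turns the sum over `t` of the `n`-th roots of these bounds into
`|B| ≤ (∏ⱼ |Bⱼ|)^{1/n}`.
-/

open Finset
open scoped ENNReal

namespace ENNReal

open MeasureTheory in
theorem sum_prod_rpow_le_prod_sum_rpow {ι κ : Type*} (s : Finset ι) (t : Finset κ)
    (f : ι → κ → ℝ≥0∞) {p : ι → ℝ} (hp : ∑ i ∈ s, p i = 1) (h2p : ∀ i ∈ s, 0 ≤ p i) :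
    ∑ k ∈ t, ∏ i ∈ s, f i k ^ p i ≤ ∏ i ∈ s, (∑ k ∈ t, f i k) ^ p i := by
  let _ : MeasurableSpace κ := ⊤
  have hcount (g : κ → ℝ≥0∞) : ∫⁻ k in t, g k ∂.count = ∑ k ∈ t, g k := by
    simp [lintegral_finset]
  simpa only [hcount] using lintegral_prod_norm_pow_le (μ := Measure.count.restrict (t : Set κ)) s
    (fun i _ => measurable_from_top.aemeasurable) hp h2p

theorem sum_pow_card_le_of_pow_card_le {α κ : Type*} {T : Finset α} {s : Finset κ} (hs : s.Nonempty)
    {a : α → ℝ≥0∞} {b₀ : ℝ≥0∞} {b : κ → ℝ≥0∞} {c : κ → α → ℝ≥0∞}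
    (ha : ∀ t ∈ T, a t ^ #s ≤ b₀ * ∏ k ∈ s, c k t) (hc : ∀ k ∈ s, ∑ t ∈ T, c k t ≤ b k) :
    (∑ t ∈ T, a t) ^ #s ≤ b₀ * ∏ k ∈ s, b k := by
  set r : ℝ := (#s : ℝ)⁻¹
  have hr : 0 < (#s : ℝ) := by exact_mod_cast hs.card_pos
  have hr0 : 0 ≤ r := inv_nonneg.2 hr.le
  have hsum : ∑ _k ∈ s, r = 1 := by simp [r, hr.ne']
  rw [← rpow_natCast, ← le_rpow_inv_iff hr]
  calc ∑ t ∈ T, a t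
      ≤ ∑ t ∈ T, (b₀ * ∏ k ∈ s, c k t) ^ r := by
        gcongr with t ht
        rw [le_rpow_inv_iff hr, rpow_natCast]
        exact ha t ht
    _ = b₀ ^ r * ∑ t ∈ T, ∏ k ∈ s, c k t ^ r := by
        simp_rw [mul_rpow_of_nonneg _ _ hr0, prod_rpow_of_nonneg hr0, mul_sum]
    _ ≤ b₀ ^ r * ∏ k ∈ s, (∑ t ∈ T, c k t) ^ r := by
        gcongr
        exact sum_prod_rpow_le_prod_sum_rpow s T c hsum fun _ _ => hr0
    _ ≤ (b₀ * ∏ k ∈ s, b k) ^ r := by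
        rw [mul_rpow_of_nonneg _ _ hr0, ← prod_rpow_of_nonneg hr0]
        gcongr with k hk
        exact hc k hk

end ENNReal

namespace LoomisWhitney

variable {ι α : Type*} [DecidableEq ι] [DecidableEq α] [Fintype ι]

def proj (B : Finset (ι → α)) (j : ι) : Finset ({i // i ≠ j} → α) :=
  B.image fun x i => x i

def slice (B : Finset (ι → α)) (j : ι) (t : α) : Finset ({i // i ≠ j} → α) :=
  proj {x ∈ B | x j = t} j

variable {B : Finset (ι → α)} {j : ι} {t : α}

lemma card_slice : #(slice B j t) = #{x ∈ B | x j = t} := by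
  refine card_image_of_injOn fun x hx y hy hxy => funext fun i => ?_
  by_cases hi : i = j
  · rw [hi, (mem_filter.1 hx).2, (mem_filter.1 hy).2]
  · exact congrFun hxy ⟨i, hi⟩

lemma card_eq_sum_card_slice (B : Finset (ι → α)) (j : ι) :
    #B = ∑ t ∈ B.image (· j), #(slice B j t) := by
  simp_rw [card_slice]
  exact card_eq_sum_card_image _ _

lemma slice_subset_proj : slice B j t ⊆ proj B j :=
  image_subset_image (filter_subset _ _)

lemma slice_nonempty (ht : t ∈ B.image (· j)) : (slice B j t).Nonempty := by
  obtain ⟨x, hx, rfl⟩ := mem_image.1 ht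
  exact ⟨_, mem_image_of_mem _ (mem_filter.2 ⟨hx, rfl⟩)⟩

lemma sum_card_proj_slice_le (B : Finset (ι → α)) (k : {i // i ≠ j}) (T : Finset α) :
    ∑ t ∈ T, #(proj (slice B j t) k) ≤ #(proj B k) := by
  let jk : {i // i ≠ k.1} := ⟨j, fun h => k.2 h.symm⟩
  let ρ : ({i // i ≠ k.1} → α) → ({i : {i // i ≠ j} // i ≠ k} → α) :=
    fun y i => y ⟨i.1.1, fun h => i.2 (Subtype.ext h)⟩
  have hfiber (t : α) : proj (slice B j t) k ⊆ {y ∈ proj B k | y jk = t}.image ρ := by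
    intro z hz
    simp only [proj, slice, mem_image, mem_filter] at hz ⊢
    obtain ⟨_, ⟨x, ⟨hx, rfl⟩, rfl⟩, rfl⟩ := hz
    exact ⟨fun i => x i, ⟨⟨x, hx, rfl⟩, rfl⟩, rfl⟩
  calc ∑ t ∈ T, #(proj (slice B j t) k)
      ≤ ∑ t ∈ T, #{y ∈ proj B k | y jk = t} :=
        sum_le_sum fun t _ => (card_le_card (hfiber t)).trans card_image_le
    _ = #{y ∈ proj B k | y jk ∈ T} := sum_card_fiberwise_eq_card_filter _ _ _
    _ ≤ #(proj B k) := card_filter_le _ _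

theorem card_pow_le_prod_card_proj_of_card_eq {n : ℕ} (hι : Fintype.card ι = n + 1)
    (hB : B.Nonempty) : #B ^ n ≤ ∏ j, #(proj B j) := by
  induction n generalizing ι with
  | zero => exact one_le_prod' fun j _ => (hB.image _).card_pos
  | succ n ih =>
    obtain ⟨j₀⟩ : Nonempty ι := Fintype.card_pos_iff.1 (by omega)
    have hcard : Fintype.card {i // i ≠ j₀} = n + 1 := by
      simp [Fintype.card_subtype_compl, hι]
    have hslice (t) (ht : t ∈ B.image (· j₀)) :
        #(slice B j₀ t) ^ (n + 1) ≤ #(proj B j₀) * ∏ k, #(proj (slice B j₀ t) k) := by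
      rw [pow_succ']
      exact Nat.mul_le_mul (card_le_card slice_subset_proj)
        (ih hcard (slice_nonempty ht))
    have hsum : (∑ t ∈ B.image (· j₀), (#(slice B j₀ t) : ℝ≥0∞)) ^ (n + 1) ≤
        #(proj B j₀) * ∏ k : {i // i ≠ j₀}, (#(proj B k) : ℝ≥0∞) := by
      rw [← hcard, ← card_univ]
      refine ENNReal.sum_pow_card_le_of_pow_card_le (c := fun k t => #(proj (slice B j₀ t) k))
        (univ_nonempty_iff.2 (Fintype.card_pos_iff.1 (by omega))) (fun t ht => ?_) fun k _ => ?_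
      · rw [card_univ, hcard]
        exact_mod_cast hslice t ht
      · exact_mod_cast sum_card_proj_slice_le B k _
    rw [Fintype.prod_eq_mul_prod_subtype_ne _ j₀, card_eq_sum_card_slice B j₀]
    exact_mod_cast hsum

theorem card_pow_le_prod_card_proj (hι : 2 ≤ Fintype.card ι) (B : Finset (ι → α)) :
    #B ^ (Fintype.card ι - 1) ≤ ∏ j, #(proj B j) := by
  rcases B.eq_empty_or_nonempty with rfl | hB
  · rw [card_empty, zero_pow (by omega)]
    exact Nat.zero_le _
  · exact card_pow_le_prod_card_proj_of_card_eq (by omega) hB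

end LoomisWhitney

/-- Discrete Loomis–Whitney inequality: for a finite `B ⊆ ℤⁿ` (`n ≥ 2`),
`|B|^{n-1} ≤ Π_j |B_j|`, where `B_j` is the projection deleting coordinate `j`. -/
theorem discrete_loomis_whitney (n : ℕ) (hn : 2 ≤ n) (B : Finset (Fin n → ℤ)) :
    B.card ^ (n - 1) ≤
      ∏ j : Fin n, (B.image (fun x => fun i : {i : Fin n // i ≠ j} => x i)).card := by
  simpa [LoomisWhitney.proj] using LoomisWhitney.card_pow_le_prod_card_proj (by simpa using hn) B
end

section
/- For every graph H with at least one edge, there is a constant c₂ > 0 such that for all sufficiently large ℓ, there exists a graph G with at most ℓ edges admitting at least c₂ · ℓ^{ρ*(H)} embeddings of H, where ρ*(H) is the fractional vertex cover number of H. -/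
open Finset

/-- The number of embeddings (injective graph homomorphisms) of `H` into `G`. -/
noncomputable def embedCount {k m : ℕ} (H : SimpleGraph (Fin k)) (G : SimpleGraph (Fin m)) : ℕ :=
  Nat.card {f : Fin k → Fin m //
    Function.Injective f ∧ ∀ u v : Fin k, H.Adj u v → G.Adj (f u) (f v)}

/-- The fractional vertex cover number `ρ*(H)`: the infimum of `Σ_e φ(e)` over fractional
cover functions `φ : E(H) → [0,1]` with `Σ_{e ∋ v} φ(e) ≥ 1` for every vertex `v`. -/
noncomputable def fracCoverNum {k : ℕ} (H : SimpleGraph (Fin k)) [DecidableRel H.Adj] : ℝ :=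
  sInf {r : ℝ | ∃ φ : Sym2 (Fin k) → ℝ,
    (∀ e, 0 ≤ φ e ∧ φ e ≤ 1) ∧
    (∀ v : Fin k, 1 ≤ ∑ e ∈ H.edgeFinset.filter (fun e => v ∈ e), φ e) ∧
    r = ∑ e ∈ H.edgeFinset, φ e}


/-!
By Hall's theorem in its defect form, applied to the bipartite double cover of `H`, a set `S`
maximising `|S| - |N(S)|` yields a fractional edge cover and a fractional independent set `ψ` with
values in `{0, 1/2, 1}` of the same weight, so `ρ*(H) ≤ Σ ψ`. (If `H` has an isolated vertex,
`ρ*(H)` is the junk value `sInf ∅ = 0`.) Blowing every vertex `v` up into an independent set of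
about `ℓ ^ ψ(v)` vertices gives at most `e(H) ℓ` edges, because `ψ(u) + ψ(v) ≤ 1` on every edge,
and at least `ℓ ^ Σ ψ` embeddings of `H`, one for each choice of a vertex in every class.
-/

lemma min_one_sum_le_sum_min_one {ι : Type*} (s : Finset ι) {a : ι → ℝ}
    (ha : ∀ i ∈ s, 0 ≤ a i) : min 1 (∑ i ∈ s, a i) ≤ ∑ i ∈ s, min 1 (a i) := by
  classical
  induction s using Finset.induction_on with
  | empty => simp
  | insert j s hj ih =>
    rw [sum_insert hj, sum_insert hj]
    have hj0 := ha j (mem_insert_self j s)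
    have hs0 : 0 ≤ ∑ i ∈ s, a i := sum_nonneg fun i hi => ha i (mem_insert_of_mem hi)
    calc min 1 (a j + ∑ i ∈ s, a i) ≤ min 1 (a j) + min 1 (∑ i ∈ s, a i) := by
          simp only [min_def]; split_ifs <;> linarith
      _ ≤ _ := by grw [ih fun i hi => ha i (mem_insert_of_mem hi)]

lemma Nat.le_sq_mul_sqrt_div {e ℓ : ℕ} (he : 0 < e) (hℓ : e ≤ ℓ) :
    ℓ ≤ (4 * e * Nat.sqrt (ℓ / e)) ^ 2 := by
  set q := ℓ / e
  set s := Nat.sqrt q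
  have hq : 1 ≤ q := (Nat.le_div_iff_mul_le he).mpr (by omega)
  have hs : 1 ≤ s := Nat.le_sqrt.mpr hq
  have hqs : q < (s + 1) ^ 2 := Nat.lt_succ_sqrt' q
  calc ℓ ≤ e * (q + 1) := (Nat.lt_mul_div_succ ℓ he).le
    _ ≤ e * (4 * s ^ 2) := Nat.mul_le_mul_left e (by nlinarith)
    _ ≤ (4 * e * s) ^ 2 := by nlinarith

lemma Real.rpow_le_pow_of_le_sq {x y ρ : ℝ} {T : ℕ} (hx : 1 ≤ x) (hy : 0 ≤ y) (hxy : x ≤ y ^ 2)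
    (hρ : 2 * ρ ≤ T) : x ^ ρ ≤ y ^ T :=
  calc x ^ ρ ≤ x ^ ((T : ℝ) / 2) := Real.rpow_le_rpow_of_exponent_le hx (by linarith)
    _ ≤ (y ^ 2) ^ ((T : ℝ) / 2) := Real.rpow_le_rpow (by linarith) hxy (by positivity)
    _ = y ^ T := by
        rw [← Real.rpow_natCast y 2, ← Real.rpow_mul hy, ← Real.rpow_natCast]
        congr 1; push_cast; ring

namespace SimpleGraph

section Deficiency

variable {V : Type*} [Fintype V] [DecidableEq V] (G : SimpleGraph V) [DecidableRel G.Adj]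

def neighborhood (s : Finset V) : Finset V := {y | ∃ x ∈ s, G.Adj x y}

def deficiency (s : Finset V) : ℤ := #s - #(G.neighborhood s)

/-- The defect form of Hall's theorem, in the bipartite double cover of `G`. -/
lemma exists_forall_adj_card_le_card_image_add (hG : ∀ v, ∃ u, G.Adj v u) (δ : ℕ)
    (hδ : ∀ s, G.deficiency s ≤ δ) :
    ∃ p : V → V, (∀ v, G.Adj v (p v)) ∧ Fintype.card V ≤ #(univ.image p) + δ := by
  classical
  -- Hall's theorem for `V` against `V` padded with `δ` vertices adjacent to everything.
  let r : V → V ⊕ Fin δ → Prop := fun x => Sum.elim (G.Adj x) fun _ => True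
  obtain ⟨f, hf_inj, hf⟩ := (Fintype.all_card_le_filter_rel_iff_exists_injective r).mp fun s => by
    rcases s.eq_empty_or_nonempty with rfl | ⟨x₀, hx₀⟩
    · simp
    calc #s ≤ #(G.neighborhood s) + δ := by have := hδ s; unfold deficiency at this; omega
      _ = #((G.neighborhood s).disjSum univ) := by simp
      _ ≤ _ := card_le_card fun b hb => ?_
    rcases b with y | j
    · simpa [neighborhood, r] using hb
    · simpa [r] using ⟨x₀, hx₀⟩
  have hp : ∀ x, ∃ y, G.Adj x y ∧ ∀ z, f x = .inl z → y = z := fun x => by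
    rcases hfx : f x with z | j
    · exact ⟨z, by simpa [r, hfx] using hf x, fun z' h => Sum.inl_injective h⟩
    · obtain ⟨y, hy⟩ := hG x
      exact ⟨y, hy, by simp⟩
  choose p hp_adj hp_eq using hp
  set M := univ.filter fun x => ∃ z, f x = .inl z
  have hM : #M ≤ #(univ.image p) := by
    refine card_le_card_of_injOn p (fun x _ => mem_image_of_mem p (mem_univ x)) ?_
    rintro x hx y hy hxy
    obtain ⟨z, hz⟩ := (mem_filter.mp hx).2
    obtain ⟨z', hz'⟩ := (mem_filter.mp hy).2
    refine hf_inj ?_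
    rw [hz, hz', ← hp_eq x z hz, ← hp_eq y z' hz', hxy]
  have hMc : #Mᶜ ≤ δ := by
    refine (card_le_card_of_injOn f (t := univ.map ⟨Sum.inr, Sum.inr_injective⟩) ?_
      hf_inj.injOn).trans (by simp)
    intro x hx
    rcases hfx : f x with z | j
    · simp [M, hfx] at hx
    · simp
  exact ⟨p, hp_adj, by rw [← card_add_card_compl M]; omega⟩

/-- Twice the half-integral fractional independent set attached to `s`: a vertex gets `1/2` for
lying in `s` and `1/2` for lying outside `N(s)`. -/
def indepWeight (s : Finset V) (v : V) : ℕ :=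
  (if v ∈ s then 1 else 0) + if v ∈ G.neighborhood s then 0 else 1

lemma indepWeight_add_le_two (s : Finset V) {u v : V} (h : G.Adj u v) :
    G.indepWeight s u + G.indepWeight s v ≤ 2 := by
  have hu : u ∈ s → v ∈ G.neighborhood s := fun hu => mem_filter.mpr ⟨mem_univ v, u, hu, h⟩
  have hv : v ∈ s → u ∈ G.neighborhood s := fun hv => mem_filter.mpr ⟨mem_univ u, v, hv, h.symm⟩
  unfold indepWeight
  split_ifs <;> simp_all

lemma sum_indepWeight (s : Finset V) :
    (∑ v, G.indepWeight s v : ℤ) = Fintype.card V + G.deficiency s := by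
  simp [indepWeight, deficiency, sum_add_distrib, Nat.cast_ite, sum_ite, filter_not,
    card_sdiff, Nat.cast_sub (card_le_univ _), add_sub_left_comm]

end Deficiency

section BlowUp

variable {V : Type*} [Fintype V] (G : SimpleGraph V) [DecidableRel G.Adj] (n : V → ℕ)

abbrev blowup : SimpleGraph (Σ v, Fin (n v)) := G.comap Sigma.fst

lemma degree_blowup (v : V) (i : Fin (n v)) :
    (G.blowup n).degree ⟨v, i⟩ = ∑ u ∈ G.neighborFinset v, n u := by
  have : (G.blowup n).neighborFinset ⟨v, i⟩ = (G.neighborFinset v).sigma fun _ => univ := by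
    ext y; simp
  simp [← card_neighborFinset_eq_degree, this]

lemma card_edgeFinset_blowup_le {B : ℕ} (hB : ∀ u v, G.Adj u v → n u * n v ≤ B) :
    #(G.blowup n).edgeFinset ≤ #G.edgeFinset * B := by
  suffices 2 * #(G.blowup n).edgeFinset ≤ 2 * (#G.edgeFinset * B) by omega
  calc 2 * #(G.blowup n).edgeFinset = ∑ v, ∑ u ∈ G.neighborFinset v, n v * n u := by
        rw [← sum_degrees_eq_twice_card_edges, ← univ_sigma_univ, sum_sigma]
        simp [degree_blowup, mul_sum]
    _ ≤ ∑ v, ∑ u ∈ G.neighborFinset v, B :=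
        sum_le_sum fun v _ => sum_le_sum fun u hu => hB v u ((mem_neighborFinset G v u).mp hu)
    _ = 2 * (#G.edgeFinset * B) := by
        simp [card_neighborFinset_eq_degree, ← sum_mul, sum_degrees_eq_twice_card_edges, mul_assoc]

end BlowUp

variable {k : ℕ} (H : SimpleGraph (Fin k)) [DecidableRel H.Adj]

/-- Capping the total weight of each edge at `1` turns a weighted family of edges covering every
vertex into a fractional cover. -/
lemma fracCoverNum_le_sum_of_cover {ι : Type*} [Fintype ι] (e : ι → Sym2 (Fin k)) (w : ι → ℝ)
    (he : ∀ i, e i ∈ H.edgeSet) (hw : ∀ i, 0 ≤ w i)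
    (hcover : ∀ v, 1 ≤ ∑ i with v ∈ e i, w i) :
    fracCoverNum H ≤ ∑ i, w i := by
  set load : Sym2 (Fin k) → ℝ := fun f => ∑ i with e i = f, w i
  have hload : ∀ t : Finset (Sym2 (Fin k)), ∑ f ∈ t, load f = ∑ i with e i ∈ t, w i :=
    fun t => sum_fiberwise_eq_sum_filter _ _ _ _
  have hload0 : ∀ f, 0 ≤ load f := fun f => sum_nonneg fun i _ => hw i
  unfold fracCoverNum
  refine (csInf_le (a := ∑ f ∈ H.edgeFinset, min 1 (load f)) ⟨0, ?_⟩ ?_).trans ?_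
  · rintro r ⟨φ, hφ, -, rfl⟩
    exact sum_nonneg fun e _ => (hφ e).1
  · refine ⟨fun f => min 1 (load f), fun f => ⟨le_min zero_le_one (hload0 f), min_le_left _ _⟩,
      fun v => ?_, rfl⟩
    calc (1 : ℝ) = min 1 (∑ i with v ∈ e i, w i) := (min_eq_left (hcover v)).symm
      _ = min 1 (∑ f ∈ H.edgeFinset.filter (v ∈ ·), load f) := by
          rw [hload]; congr 2; ext i; simp [he i]
      _ ≤ _ := min_one_sum_le_sum_min_one _ fun f _ => hload0 f
  · calc ∑ f ∈ H.edgeFinset, min 1 (load f) ≤ ∑ f ∈ H.edgeFinset, load f :=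
          sum_le_sum fun f _ => min_le_right _ _
      _ = ∑ i, w i := by rw [hload]; congr 1; ext i; simp [he i]

lemma fracCoverNum_eq_zero_of_isolated {v : Fin k} (hv : ∀ u, ¬ H.Adj v u) :
    fracCoverNum H = 0 := by
  rw [fracCoverNum, ← Real.sInf_empty]
  congr
  refine Set.eq_empty_of_forall_notMem ?_
  rintro r ⟨φ, -, hcover, -⟩
  have : H.edgeFinset.filter (v ∈ ·) = ∅ := by
    refine filter_eq_empty_iff.mpr fun f hf hvf => ?_
    induction f with
    | h a b =>
      rw [mem_edgeFinset, mem_edgeSet] at hf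
      rcases Sym2.mem_iff.mp hvf with rfl | rfl
      exacts [hv b hf, hv a hf.symm]
  linarith [show (1 : ℝ) ≤ 0 by simpa [this] using hcover v]

/-- Every vertex `v` puts weight `1/2` on the edge `v p(v)`, and `1` if `v` is not hit by `p`. -/
lemma fracCoverNum_le_of_forall_adj (p : Fin k → Fin k) (hp : ∀ v, H.Adj v (p v)) :
    fracCoverNum H ≤ k - #(univ.image p) / 2 := by
  set w : Fin k → ℝ := fun v => 1 - 2⁻¹ * if v ∈ univ.image p then 1 else 0
  have hw : ∀ v, 2⁻¹ ≤ w v := fun v => by simp only [w]; split_ifs <;> norm_num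
  calc fracCoverNum H ≤ ∑ v, w v := by
        refine H.fracCoverNum_le_sum_of_cover (fun v => s(v, p v)) w (fun v => hp v)
          (fun v => by linarith [hw v]) fun v => ?_
        by_cases hv : v ∈ univ.image p
        · obtain ⟨x, -, rfl⟩ := mem_image.mp hv
          have hsub : {x, p x} ⊆ univ.filter fun i => p x ∈ s(i, p i) := by simp [insert_subset_iff]
          calc (1 : ℝ) = 2⁻¹ + 2⁻¹ := by norm_num
            _ ≤ ∑ i ∈ {x, p x}, w i := by
                rw [sum_pair (hp x).ne]; linarith [hw x, hw (p x)]
            _ ≤ _ := sum_le_sum_of_subset_of_nonneg hsub fun i _ _ => by linarith [hw i]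
        · calc (1 : ℝ) = w v := by simp only [w, if_neg hv]; ring
            _ ≤ _ := single_le_sum (f := w) (fun i _ => by linarith [hw i]) (by simp)
    _ = k - #(univ.image p) / 2 := by
        simp only [w, sum_sub_distrib, ← mul_sum, sum_boole, filter_mem_eq_inter, univ_inter,
          sum_const, card_univ, Fintype.card_fin, nsmul_eq_mul, mul_one]
        ring

lemma two_mul_fracCoverNum_le_of_isMax (hH : ∀ v, ∃ u, H.Adj v u) {s : Finset (Fin k)}
    (hs : ∀ t, H.deficiency t ≤ H.deficiency s) :
    2 * fracCoverNum H ≤ k + H.deficiency s := by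
  have hs0 : 0 ≤ H.deficiency s := by simpa [deficiency, neighborhood] using hs ∅
  obtain ⟨p, hp, hcard⟩ := H.exists_forall_adj_card_le_card_image_add hH (H.deficiency s).toNat
    fun t => (hs t).trans (Int.self_le_toNat _)
  have hcard' : (k : ℤ) ≤ #(univ.image p) + H.deficiency s := by
    simpa [Int.toNat_of_nonneg hs0] using (Nat.cast_le (α := ℤ)).mpr hcard
  have hcard'' : (k : ℝ) ≤ #(univ.image p) + H.deficiency s := by exact_mod_cast hcard'
  linarith [H.fracCoverNum_le_of_forall_adj p hp]

/-- Half-integral LP duality `ρ*(H) ≤ α*(H)`. -/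
lemma exists_two_mul_fracCoverNum_le :
    ∃ a : Fin k → ℕ, (∀ u v, H.Adj u v → a u + a v ≤ 2) ∧ 2 * fracCoverNum H ≤ ∑ v, (a v : ℝ) := by
  by_cases hiso : ∃ v, ∀ u, ¬ H.Adj v u
  · obtain ⟨v, hv⟩ := hiso
    exact ⟨0, by simp, by simp [H.fracCoverNum_eq_zero_of_isolated hv]⟩
  push Not at hiso
  obtain ⟨s, -, hs⟩ := exists_max_image univ H.deficiency univ_nonempty
  refine ⟨H.indepWeight s, fun u v => H.indepWeight_add_le_two s, ?_⟩
  have hsum := H.sum_indepWeight s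
  rw [Fintype.card_fin] at hsum
  calc 2 * fracCoverNum H ≤ k + H.deficiency s :=
        H.two_mul_fracCoverNum_le_of_isMax hiso fun t => hs t (mem_univ t)
    _ = ∑ v, (H.indepWeight s v : ℝ) := by exact_mod_cast hsum.symm

lemma exists_prod_le_embedCount (n : Fin k → ℕ) {B : ℕ}
    (hB : ∀ u v, H.Adj u v → n u * n v ≤ B) :
    ∃ (m : ℕ) (G : SimpleGraph (Fin m)),
      G.edgeSet.ncard ≤ #H.edgeFinset * B ∧ ∏ v, n v ≤ embedCount H G := by
  classical
  set e := (H.blowup n).overFinIso rfl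
  refine ⟨_, (H.blowup n).overFin rfl, ?_, ?_⟩
  · rw [Set.ncard_eq_toFinset_card', ← edgeFinset, ← e.card_edgeFinset_eq]
    exact H.card_edgeFinset_blowup_le n hB
  · let embed (g : ∀ v, Fin (n v)) : {f : Fin k → Fin _ // Function.Injective f ∧
        ∀ u v, H.Adj u v → ((H.blowup n).overFin rfl).Adj (f u) (f v)} :=
      ⟨fun v => e ⟨v, g v⟩, fun u v huv => congrArg Sigma.fst (e.injective huv),
        fun u v huv => e.map_adj_iff.mpr huv⟩
    have hembed : Function.Injective embed := fun g g' h => funext fun v =>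
      eq_of_heq (Sigma.mk.inj_iff.mp (e.injective (congrFun (congrArg Subtype.val h) v))).2
    calc ∏ v, n v = Nat.card (∀ v, Fin (n v)) := by simp
      _ ≤ _ := Nat.card_le_card_of_injective embed hembed

end SimpleGraph

theorem embed_lower_bound_general {k : ℕ} (H : SimpleGraph (Fin k)) [DecidableRel H.Adj] :
    ∃ c₂ : ℝ, 0 < c₂ ∧ ∃ L : ℕ, ∀ ℓ : ℕ, L ≤ ℓ →
      ∃ (m : ℕ) (G : SimpleGraph (Fin m)),
        G.edgeSet.ncard ≤ ℓ ∧ c₂ * (ℓ : ℝ) ^ fracCoverNum H ≤ (embedCount H G : ℝ) := by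
  obtain ⟨a, ha_adj, ha_cover⟩ := H.exists_two_mul_fracCoverNum_le
  set e := #H.edgeFinset + 1
  set T := ∑ v, a v
  refine ⟨((4 * e : ℝ) ^ T)⁻¹, by positivity, e, fun ℓ hℓ => ?_⟩
  set s := Nat.sqrt (ℓ / e)
  have hs : 1 ≤ s := Nat.le_sqrt.mpr ((Nat.le_div_iff_mul_le (by omega)).mpr (by omega))
  obtain ⟨m, G, hG_edges, hG_embed⟩ := H.exists_prod_le_embedCount (fun v => s ^ a v) (B := s ^ 2)
    fun u v huv => by rw [← pow_add]; exact Nat.pow_le_pow_right hs (ha_adj u v huv)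
  refine ⟨m, G, hG_edges.trans ?_, ?_⟩
  · calc #H.edgeFinset * s ^ 2 ≤ e * (ℓ / e) := Nat.mul_le_mul (by omega) (Nat.sqrt_le' _)
      _ ≤ ℓ := Nat.mul_div_le ℓ e
  · rw [inv_mul_le_iff₀ (by positivity)]
    calc (ℓ : ℝ) ^ fracCoverNum H ≤ ((4 * e * s : ℕ) : ℝ) ^ T :=
          Real.rpow_le_pow_of_le_sq (by exact_mod_cast (by omega : 1 ≤ ℓ)) (by positivity)
            (by exact_mod_cast Nat.le_sq_mul_sqrt_div (by omega) hℓ) (by simpa [T] using ha_cover)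
      _ = (4 * e) ^ T * ((∏ v, s ^ a v : ℕ) : ℝ) := by push_cast; rw [mul_pow, prod_pow_eq_pow_sum]
      _ ≤ (4 * e) ^ T * embedCount H G := by gcongr

/-- Friedgut–Kahn lower bound: for every graph `H` with at least one edge there is a
constant `c₂ > 0` such that for all sufficiently large `ℓ` some graph `G` with at most
`ℓ` edges admits at least `c₂ ℓ^{ρ*(H)}` embeddings of `H`. -/
theorem embed_lower_bound {k : ℕ} (H : SimpleGraph (Fin k)) [DecidableRel H.Adj]
    (hE : H.edgeFinset.Nonempty) :
    ∃ c₂ : ℝ, 0 < c₂ ∧ ∃ L : ℕ, ∀ ℓ : ℕ, L ≤ ℓ →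
      ∃ (m : ℕ) (G : SimpleGraph (Fin m)),
        G.edgeSet.ncard ≤ ℓ ∧ c₂ * (ℓ : ℝ) ^ fracCoverNum H ≤ (embedCount H G : ℝ) :=
  embed_lower_bound_general H
end

section
/- Brégman's theorem: Let A be an n×n matrix with entries in {0,1} whose i-th row sum is dᵢ ≥ 1 for each i. Then perm(A) ≤ Π_{i=1}^{n} (dᵢ!)^{1/dᵢ}, where perm(A) = Σ_{σ∈Sₙ} Π_i a_{i,σ(i)}. -/
open Finset Equiv Real

private def bperm (n : ℕ) (A : Fin n → Fin n → ℕ) : ℕ :=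
  ∑ σ : Equiv.Perm (Fin n), ∏ i, A i (σ i)

private lemma bperm_eq_card (n : ℕ) (A : Fin n → Fin n → ℕ)
    (h01 : ∀ i j, A i j = 0 ∨ A i j = 1) :
    bperm n A = (univ.filter (fun σ : Equiv.Perm (Fin n) => ∀ j, A j (σ j) = 1)).card := by
  rw [bperm, Finset.card_filter]
  refine Finset.sum_congr rfl fun σ _ => ?_
  by_cases h : ∀ j, A j (σ j) = 1
  · rw [if_pos h, Finset.prod_eq_one fun j _ => h j]
  · rw [if_neg h]
    push_neg at h
    obtain ⟨j, hj⟩ := h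
    exact Finset.prod_eq_zero (mem_univ j) ((h01 j (σ j)).resolve_right hj)

/-- forward map building a permutation of `Fin (n+1)` with `σ i = k` from one of `Fin n`. -/
private def bext (n : ℕ) (i k : Fin (n + 1)) (τ : Equiv.Perm (Fin n)) : Equiv.Perm (Fin (n + 1)) :=
  (finSuccEquiv' i).trans ((Equiv.optionCongr τ).trans (finSuccEquiv' k).symm)

private lemma bext_at (n : ℕ) (i k : Fin (n + 1)) (τ : Equiv.Perm (Fin n)) :
    bext n i k τ i = k := by
  simp [bext]

private lemma bext_succAbove (n : ℕ) (i k : Fin (n + 1)) (τ : Equiv.Perm (Fin n)) (j : Fin n) :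
    bext n i k τ (i.succAbove j) = k.succAbove (τ j) := by
  simp [bext]

private lemma bminor_card (n : ℕ) (A : Fin (n + 1) → Fin (n + 1) → ℕ)
    (h01 : ∀ i j, A i j = 0 ∨ A i j = 1) (i k : Fin (n + 1)) :
    bperm n (fun j l => A (i.succAbove j) (k.succAbove l)) =
      (univ.filter (fun σ : Equiv.Perm (Fin (n + 1)) =>
        σ i = k ∧ ∀ j, j ≠ i → A j (σ j) = 1)).card := by
  rw [bperm_eq_card _ _ (fun a b => h01 _ _)]
  refine Finset.card_bij (fun τ _ => bext n i k τ) ?_ ?_ ?_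
  · intro τ hτ
    simp only [mem_filter, mem_univ, true_and] at hτ ⊢
    refine ⟨bext_at n i k τ, fun j hj => ?_⟩
    obtain ⟨l, rfl⟩ := Fin.exists_succAbove_eq hj
    rw [bext_succAbove]
    exact hτ l
  · intro τ₁ _ τ₂ _ h
    ext j
    have := congrArg (· (i.succAbove j)) h
    simp only [bext_succAbove] at this
    exact congrArg Fin.val (Fin.succAbove_right_injective this)
  · intro σ hσ
    simp only [mem_filter, mem_univ, true_and] at hσ
    obtain ⟨hσi, hσ2⟩ := hσ
    set ρ : Option (Fin n) ≃ Option (Fin n) :=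
      (finSuccEquiv' i).symm.trans (σ.trans (finSuccEquiv' k)) with hρ
    have hρnone : ρ none = none := by simp [hρ, hσi]
    set τ := Equiv.removeNone ρ with hτ
    have hsome : ∀ j, ρ (some j) = some (τ j) := by
      intro j
      refine (Equiv.removeNone_some ρ ?_).symm
      rcases h : ρ (some j) with _ | a
      · exact absurd (ρ.injective (h.trans hρnone.symm)) (by simp)
      · exact ⟨a, rfl⟩
    have hστ : ∀ j, σ (i.succAbove j) = k.succAbove (τ j) := by
      intro j
      have := hsome j
      simp only [hρ, Equiv.trans_apply, finSuccEquiv'_symm_some] at this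
      have : σ (i.succAbove j) = (finSuccEquiv' k).symm (some (τ j)) := by
        rw [← this]; simp
      simpa using this
    refine ⟨τ, ?_, ?_⟩
    · simp only [mem_filter, mem_univ, true_and]
      intro l
      rw [← hστ l]
      exact hσ2 _ (Fin.succAbove_ne i l)
    · ext x
      rcases eq_or_ne x i with rfl | hx
      · rw [bext_at, hσi]
      · obtain ⟨l, rfl⟩ := Fin.exists_succAbove_eq hx
        rw [bext_succAbove, hστ]

private lemma bjensen {α : Type*} (s : Finset α) (f : α → ℕ) (r : ℕ)
    (hcard : s.card = r) (hr : 0 < r) :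
    ((∑ k ∈ s, f k : ℕ) : ℝ) * Real.log (∑ k ∈ s, f k : ℕ) -
      ((∑ k ∈ s, f k : ℕ) : ℝ) * Real.log r ≤
      ∑ k ∈ s, (f k : ℝ) * Real.log (f k) := by
  set t : ℝ := ((∑ k ∈ s, f k : ℕ) : ℝ) with ht
  have htsum : t = ∑ k ∈ s, (f k : ℝ) := by rw [ht]; push_cast; ring
  have ht0 : 0 ≤ t := by positivity
  rcases eq_or_lt_of_le ht0 with h0 | htpos
  · have : ∀ k ∈ s, (f k : ℝ) = 0 := by
      intro k hk
      have := Finset.sum_eq_zero_iff_of_nonneg (fun k _ => by positivity) |>.mp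
        (htsum ▸ h0.symm) k hk
      exact this
    rw [← h0]
    simp only [zero_mul, sub_zero, zero_sub]
    rw [Finset.sum_congr rfl fun k hk => by rw [this k hk, zero_mul]]
    simp
  · have hrR : (0:ℝ) < r := by exact_mod_cast hr
    have key := (Real.strictConvexOn_mul_log.convexOn).map_sum_le
      (t := s) (w := fun _ => (1:ℝ) / r) (p := fun k => (f k : ℝ))
      (fun k _ => by positivity)
      (by rw [Finset.sum_const, hcard, nsmul_eq_mul]; field_simp)
      (fun k _ => by simp [Set.mem_Ici])
    simp only [smul_eq_mul] at key
    have hpt : ∑ k ∈ s, 1 / (r:ℝ) * (f k) = t / r := by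
      rw [htsum, Finset.sum_div]
      refine Finset.sum_congr rfl fun k _ => ?_
      field_simp
    rw [hpt] at key
    have key2 : t * Real.log (t / r) ≤ ∑ k ∈ s, (f k : ℝ) * Real.log (f k) := by
      have := mul_le_mul_of_nonneg_left key (le_of_lt hrR)
      calc t * Real.log (t / r) = (r:ℝ) * (t / r * Real.log (t / r)) := by
            field_simp
        _ ≤ (r:ℝ) * ∑ k ∈ s, 1 / (r:ℝ) * ((f k:ℝ) * Real.log (f k)) := this
        _ = ∑ k ∈ s, (f k : ℝ) * Real.log (f k) := by
            rw [Finset.mul_sum]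
            refine Finset.sum_congr rfl fun k _ => ?_
            field_simp
    rwa [Real.log_div (ne_of_gt htpos) (ne_of_gt hrR), mul_sub] at key2

private theorem bmaster : ∀ (n : ℕ) (A : Fin n → Fin n → ℕ),
    (∀ i j, A i j = 0 ∨ A i j = 1) → ∀ r : Fin n → ℕ, (∀ i, r i = ∑ j, A i j) →
    (bperm n A : ℝ) * Real.log (bperm n A) ≤
      (bperm n A : ℝ) * ∑ i, (1 / (r i : ℝ)) * Real.log (Nat.factorial (r i)) := by
  intro n
  induction n with
  | zero =>
      intro A h01 r hr
      have : bperm 0 A = 1 := by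
        rw [bperm]
        simp
      rw [this]
      simp
  | succ n ih =>
      intro A h01 r hr
      classical
      set T : Finset (Equiv.Perm (Fin (n + 1))) :=
        univ.filter (fun σ => ∀ j, A j (σ j) = 1) with hT
      have hpT : bperm (n + 1) A = T.card := bperm_eq_card _ _ h01
      rcases Nat.eq_zero_or_pos T.card with h0 | hp
      · rw [hpT, h0]; simp
      · obtain ⟨σ₀, hσ₀⟩ := Finset.card_pos.mp hp
        rw [hT, mem_filter] at hσ₀
        have hσ₀1 : ∀ j, A j (σ₀ j) = 1 := hσ₀.2
        set S : Fin (n + 1) → Finset (Fin (n + 1)) :=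
          fun u => univ.filter (fun c => A u c = 1) with hS
        have hrow : ∀ u, r u = (S u).card := by
          intro u
          rw [hr u, hS, Finset.card_filter]
          refine Finset.sum_congr rfl fun c _ => ?_
          rcases h01 u c with h | h <;> simp [h]
        have hrle : ∀ u, r u ≤ n + 1 := by
          intro u
          rw [hrow u]
          simpa [hS] using Finset.card_filter_le (univ : Finset (Fin (n+1))) (fun c => A u c = 1)
        have hrpos : ∀ u, 1 ≤ r u := by
          intro u
          rw [hrow u]
          exact Finset.card_pos.mpr ⟨σ₀ u, by simp [hS, hσ₀1 u]⟩
        set T' : Fin (n + 1) → Fin (n + 1) → Finset (Equiv.Perm (Fin (n + 1))) :=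
          fun i k => univ.filter (fun σ => σ i = k ∧ ∀ j, j ≠ i → A j (σ j) = 1) with hT'
        -- fibers of T
        have hfiber1 : ∀ i k, A i k = 1 → T.filter (fun σ => σ i = k) = T' i k := by
          intro i k hik
          ext σ
          simp only [hT, hT', mem_filter, mem_univ, true_and, filter_filter]
          constructor
          · rintro ⟨h1, h2⟩; exact ⟨h2, fun j _ => h1 j⟩
          · rintro ⟨h2, h1⟩
            refine ⟨fun j => ?_, h2⟩
            rcases eq_or_ne j i with rfl | hj
            · rw [h2]; exact hik
            · exact h1 j hj
        have hfiber0 : ∀ i k, A i k = 0 → T.filter (fun σ => σ i = k) = ∅ := by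
          intro i k hik
          refine Finset.eq_empty_of_forall_notMem fun σ hσ => ?_
          simp only [hT, mem_filter, mem_univ, true_and, filter_filter] at hσ
          have := hσ.1 i
          rw [hσ.2, hik] at this
          exact absurd this.symm one_ne_zero
        have hpsum : ∀ i, T.card = ∑ k ∈ S i, (T' i k).card := by
          intro i
          rw [Finset.card_eq_sum_card_fiberwise (s := T)
            (f := fun σ => σ i) (t := (univ : Finset (Fin (n+1)))) (fun x _ => mem_univ _)]
          rw [← Finset.sum_subset (Finset.subset_univ (S i)) (fun k _ hk => by
            rw [hfiber0 i k ((h01 i k).resolve_right (by simpa [hS] using hk))]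
            simp)]
          exact Finset.sum_congr rfl fun k hk =>
            congrArg Finset.card (hfiber1 i k (by simpa [hS] using hk))
        -- reindexing sums over fibers
        have hreindex : ∀ (i : Fin (n + 1)) (h : Fin (n + 1) → ℝ),
            ∑ σ ∈ T, h (σ i) = ∑ k ∈ S i, ((T' i k).card : ℝ) * h k := by
          intro i h
          rw [← Finset.sum_fiberwise T (fun σ => σ i) (fun σ => h (σ i))]
          rw [← Finset.sum_subset (Finset.subset_univ (S i)) (fun k _ hk => by
            rw [hfiber0 i k ((h01 i k).resolve_right (by simpa [hS] using hk))]
            simp)]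
          refine Finset.sum_congr rfl fun k hk => ?_
          rw [hfiber1 i k (by simpa [hS] using hk)]
          have hc : ∀ σ ∈ T' i k, h (σ i) = h k := fun σ hσ => by
            rw [(Finset.mem_filter.mp hσ).2.1]
          rw [Finset.sum_congr rfl hc, Finset.sum_const, nsmul_eq_mul]
        -- Jensen step for each row i
        have hstep : ∀ i : Fin (n + 1),
            (T.card : ℝ) * Real.log T.card - (T.card : ℝ) * Real.log (r i) ≤
              ∑ σ ∈ T, Real.log ((T' i (σ i)).card) := by
          intro i
          have hj := bjensen (S i) (fun k => (T' i k).card) (r i) (hrow i).symm (hrpos i)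
          rw [← hpsum i] at hj
          rw [hreindex i (fun k => Real.log ((T' i k).card))]
          exact hj
        -- apply induction hypothesis to minors
        have hq : ∀ i k, (T' i k).card =
            bperm n (fun j l => A (i.succAbove j) (k.succAbove l)) :=
          fun i k => (bminor_card n A h01 i k).symm
        have hIH : ∀ σ ∈ T, ∀ i : Fin (n + 1),
            Real.log ((T' i (σ i)).card) ≤
              ∑ j : Fin n, (1 / ((r (i.succAbove j) - A (i.succAbove j) (σ i) : ℕ) : ℝ)) *
                Real.log (Nat.factorial (r (i.succAbove j) - A (i.succAbove j) (σ i))) := by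
          intro σ hσ i
          have hσT : ∀ j, A j (σ j) = 1 := by
            rw [hT, mem_filter] at hσ; exact hσ.2
          have hIH1 := ih (fun j l => A (i.succAbove j) ((σ i).succAbove l))
            (fun a b => h01 _ _)
            (fun j => r (i.succAbove j) - A (i.succAbove j) (σ i)) (fun j => by
              have h1 := hr (i.succAbove j)
              rw [Fin.sum_univ_succAbove (fun c => A (i.succAbove j) c) (σ i)] at h1
              show r (i.succAbove j) - A (i.succAbove j) (σ i) =
                ∑ l : Fin n, A (i.succAbove j) ((σ i).succAbove l)
              omega)
          have hcard : (T' i (σ i)).card =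
              bperm n (fun j l => A (i.succAbove j) ((σ i).succAbove l)) := hq i (σ i)
          have hq1 : 1 ≤ bperm n (fun j l => A (i.succAbove j) ((σ i).succAbove l)) := by
            rw [← hcard]
            refine Finset.card_pos.mpr ⟨σ, ?_⟩
            rw [hT', Finset.mem_filter]
            exact ⟨mem_univ _, rfl, fun j _ => hσT j⟩
          have hbpos : (0 : ℝ) <
              (bperm n (fun j l => A (i.succAbove j) ((σ i).succAbove l)) : ℝ) := by
            exact_mod_cast hq1
          rw [hcard]
          exact (mul_le_mul_iff_right₀ hbpos).mp hIH1
        -- double counting for a fixed permutation in T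
        set E : Fin (n + 1) → ℝ := fun u =>
          Real.log (Nat.factorial (r u)) - Real.log (r u) +
            (((n : ℝ) + 1 - (r u : ℝ)) / (r u : ℝ)) * Real.log (Nat.factorial (r u)) with hE
        set g : Fin (n + 1) → Fin (n + 1) → ℝ := fun u c =>
          (1 / ((r u - A u c : ℕ) : ℝ)) * Real.log (Nat.factorial (r u - A u c)) with hg
        have hfact : ∀ u, Real.log (Nat.factorial (r u - 1)) =
            Real.log (Nat.factorial (r u)) - Real.log (r u) := by
          intro u
          have hm := Nat.mul_factorial_pred (n := r u) (by have := hrpos u; omega)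
          have hr0 : ((r u : ℕ) : ℝ) ≠ 0 := Nat.cast_ne_zero.mpr (by have := hrpos u; omega)
          have hf0 : ((Nat.factorial (r u - 1) : ℕ) : ℝ) ≠ 0 :=
            Nat.cast_ne_zero.mpr (Nat.factorial_ne_zero _)
          rw [← hm]
          push_cast
          rw [Real.log_mul hr0 hf0]
          ring
        have hcount : ∀ σ ∈ T,
            ∑ i : Fin (n + 1), ∑ j : Fin n,
              (1 / ((r (i.succAbove j) - A (i.succAbove j) (σ i) : ℕ) : ℝ)) *
                Real.log (Nat.factorial (r (i.succAbove j) - A (i.succAbove j) (σ i))) =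
              ∑ u, E u := by
          intro σ hσ
          have hσT : ∀ j, A j (σ j) = 1 := by
            rw [hT, mem_filter] at hσ; exact hσ.2
          have c1 : ∀ (c i : Fin (n + 1)),
              ∑ j : Fin n, g (i.succAbove j) c = (∑ u, g u c) - g i c := by
            intro c i
            rw [Fin.sum_univ_succAbove (fun u => g u c) i]
            ring
          have hmain : ∑ i : Fin (n + 1), ∑ j : Fin n, g (i.succAbove j) (σ i) =
              ∑ u, ((∑ c, g u c) - g u (σ u)) := by
            calc ∑ i : Fin (n + 1), ∑ j : Fin n, g (i.succAbove j) (σ i)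
                = ∑ i : Fin (n + 1), ((∑ u, g u (σ i)) - g i (σ i)) :=
                  Finset.sum_congr rfl fun i _ => c1 (σ i) i
              _ = (∑ i : Fin (n + 1), ∑ u, g u (σ i)) - ∑ i, g i (σ i) :=
                  Finset.sum_sub_distrib _ _
              _ = (∑ u, ∑ c, g u c) - ∑ u, g u (σ u) := by
                  rw [Finset.sum_comm]
                  congr 1
                  exact Finset.sum_congr rfl fun u _ => Equiv.sum_comp σ (g u)
              _ = ∑ u, ((∑ c, g u c) - g u (σ u)) := (Finset.sum_sub_distrib _ _).symm
          have hperu : ∀ u, (∑ c, g u c) - g u (σ u) = E u := by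
            intro u
            have hcast1 : (((n + 1) - r u : ℕ) : ℝ) = (n : ℝ) + 1 - (r u : ℝ) := by
              have := hrle u
              push_cast [Nat.cast_sub this]
              ring
            have hsplit : ∑ c, g u c =
                (r u : ℝ) * ((1 / ((r u - 1 : ℕ) : ℝ)) * Real.log (Nat.factorial (r u - 1))) +
                ((n : ℝ) + 1 - (r u : ℝ)) *
                  ((1 / (r u : ℝ)) * Real.log (Nat.factorial (r u))) := by
              rw [← Finset.sum_filter_add_sum_filter_not univ (fun c => A u c = 1) (g u)]
              congr 1
              · have hc : ∀ c ∈ univ.filter (fun c => A u c = 1), g u c =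
                    (1 / ((r u - 1 : ℕ) : ℝ)) * Real.log (Nat.factorial (r u - 1)) := by
                  intro c hc
                  rw [hg]
                  simp only
                  rw [(Finset.mem_filter.mp hc).2]
                rw [Finset.sum_congr rfl hc, Finset.sum_const, nsmul_eq_mul, ← hrow u]
              · have hc : ∀ c ∈ univ.filter (fun c => ¬ A u c = 1), g u c =
                    (1 / (r u : ℝ)) * Real.log (Nat.factorial (r u)) := by
                  intro c hc
                  have h0 : A u c = 0 :=
                    (h01 u c).resolve_right (Finset.mem_filter.mp hc).2
                  rw [hg]
                  simp only
                  rw [h0, Nat.sub_zero]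
                rw [Finset.sum_congr rfl hc, Finset.sum_const, nsmul_eq_mul]
                congr 1
                rw [Finset.filter_not, Finset.card_sdiff_of_subset (Finset.filter_subset _ _),
                  Finset.card_univ]
                rw [← hcast1]
                congr 2
                · simp
                · exact (hrow u).symm
            have hgσ : g u (σ u) =
                (1 / ((r u - 1 : ℕ) : ℝ)) * Real.log (Nat.factorial (r u - 1)) := by
              rw [hg]
              simp only
              rw [hσT u]
            have c7 : ((r u : ℝ) - 1) *
                ((1 / ((r u - 1 : ℕ) : ℝ)) * Real.log (Nat.factorial (r u - 1))) =
                Real.log (Nat.factorial (r u - 1)) := by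
              rcases eq_or_lt_of_le (hrpos u) with h1 | h2
              · rw [← h1]
                norm_num
              · have hc : ((r u - 1 : ℕ) : ℝ) = (r u : ℝ) - 1 := by
                  push_cast [Nat.cast_sub (hrpos u)]
                  ring
                have hne : (r u : ℝ) - 1 ≠ 0 := by
                  have : (2 : ℝ) ≤ (r u : ℝ) := by exact_mod_cast h2
                  nlinarith
                rw [hc]
                field_simp
            have hkey : (∑ c, g u c) - g u (σ u) =
                ((r u : ℝ) - 1) *
                  ((1 / ((r u - 1 : ℕ) : ℝ)) * Real.log (Nat.factorial (r u - 1))) +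
                ((n : ℝ) + 1 - (r u : ℝ)) *
                  ((1 / (r u : ℝ)) * Real.log (Nat.factorial (r u))) := by
              rw [hsplit, hgσ]; ring
            rw [hkey, c7, hfact u, hE]
            ring
          rw [hmain]
          exact Finset.sum_congr rfl fun u _ => hperu u
        -- assemble everything
        have hA1 : ∀ σ ∈ T, ∑ i : Fin (n + 1), Real.log ((T' i (σ i)).card) ≤ ∑ u, E u :=
          fun σ hσ => le_trans (Finset.sum_le_sum fun i _ => hIH σ hσ i)
            (le_of_eq (hcount σ hσ))
        have hA2 : ∑ i : Fin (n + 1),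
            ((T.card : ℝ) * Real.log T.card - (T.card : ℝ) * Real.log (r i)) ≤
            (T.card : ℝ) * ∑ u, E u := by
          calc ∑ i : Fin (n + 1), ((T.card : ℝ) * Real.log T.card - (T.card : ℝ) * Real.log (r i))
              ≤ ∑ i : Fin (n + 1), ∑ σ ∈ T, Real.log ((T' i (σ i)).card) :=
                Finset.sum_le_sum fun i _ => hstep i
            _ = ∑ σ ∈ T, ∑ i : Fin (n + 1), Real.log ((T' i (σ i)).card) := Finset.sum_comm
            _ ≤ ∑ σ ∈ T, ∑ u, E u := Finset.sum_le_sum fun σ hσ => hA1 σ hσ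
            _ = (T.card : ℝ) * ∑ u, E u := by rw [Finset.sum_const, nsmul_eq_mul]
        have hLHS : ∑ i : Fin (n + 1),
            ((T.card : ℝ) * Real.log T.card - (T.card : ℝ) * Real.log (r i)) =
            ((n : ℝ) + 1) * ((T.card : ℝ) * Real.log T.card) -
              (T.card : ℝ) * ∑ u, Real.log (r u) := by
          rw [Finset.sum_sub_distrib, Finset.sum_const, Finset.card_univ, Finset.mul_sum]
          simp [nsmul_eq_mul]
        have hEu : ∀ u, Real.log (r u) + E u =
            ((n : ℝ) + 1) * ((1 / (r u : ℝ)) * Real.log (Nat.factorial (r u))) := by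
          intro u
          have h0 : (r u : ℝ) ≠ 0 := Nat.cast_ne_zero.mpr (by have := hrpos u; omega)
          rw [hE]
          simp only
          field_simp
          ring
        have hfin : ((n : ℝ) + 1) * ((T.card : ℝ) * Real.log T.card) ≤
            ((n : ℝ) + 1) * ((T.card : ℝ) *
              ∑ u, (1 / (r u : ℝ)) * Real.log (Nat.factorial (r u))) := by
          have h1 : ((n : ℝ) + 1) * ((T.card : ℝ) * Real.log T.card) ≤
              (T.card : ℝ) * ∑ u, Real.log (r u) + (T.card : ℝ) * ∑ u, E u := by
            have := hA2
            rw [hLHS] at this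
            linarith
          calc ((n : ℝ) + 1) * ((T.card : ℝ) * Real.log T.card)
              ≤ (T.card : ℝ) * ∑ u, Real.log (r u) + (T.card : ℝ) * ∑ u, E u := h1
            _ = (T.card : ℝ) * ∑ u, (Real.log (r u) + E u) := by
                have hsa : ∑ u, (Real.log ((r u : ℕ) : ℝ) + E u) =
                    (∑ u, Real.log ((r u : ℕ) : ℝ)) + ∑ u, E u := Finset.sum_add_distrib
                rw [hsa, mul_add]
            _ = (T.card : ℝ) * ∑ u, ((n : ℝ) + 1) *
                  ((1 / (r u : ℝ)) * Real.log (Nat.factorial (r u))) := by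
                rw [Finset.sum_congr rfl fun u _ => hEu u]
            _ = ((n : ℝ) + 1) * ((T.card : ℝ) *
                  ∑ u, (1 / (r u : ℝ)) * Real.log (Nat.factorial (r u))) := by
                rw [← Finset.mul_sum]
                ring
        have hn1 : (0 : ℝ) < (n : ℝ) + 1 := by positivity
        have := le_of_mul_le_mul_left hfin hn1
        rw [hpT]
        push_cast at this ⊢
        exact this

/-- Brégman's theorem: a 0-1 `n×n` matrix with row sums `dᵢ ≥ 1` has permanent at most
`Π (dᵢ!)^{1/dᵢ}`. -/
theorem bregman (n : ℕ) (A : Fin n → Fin n → ℕ)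
    (h01 : ∀ i j, A i j = 0 ∨ A i j = 1)
    (d : Fin n → ℕ) (hd : ∀ i, d i = ∑ j, A i j) (hd1 : ∀ i, 1 ≤ d i) :
    ((∑ σ : Equiv.Perm (Fin n), ∏ i, A i (σ i) : ℕ) : ℝ) ≤
      ∏ i, (Nat.factorial (d i) : ℝ) ^ (1 / (d i : ℝ)) := by
  have hmaster := bmaster n A h01 d hd
  show ((bperm n A : ℕ) : ℝ) ≤ _
  rcases Nat.eq_zero_or_pos (bperm n A) with h0 | hp
  · rw [h0]
    push_cast
    exact Finset.prod_nonneg fun i _ => Real.rpow_nonneg (by positivity) _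
  · have hppos : (0 : ℝ) < (bperm n A : ℝ) := by exact_mod_cast hp
    have hlog : Real.log (bperm n A) ≤
        ∑ i, (1 / (d i : ℝ)) * Real.log (Nat.factorial (d i)) :=
      (mul_le_mul_iff_right₀ hppos).mp hmaster
    calc ((bperm n A : ℕ) : ℝ) = Real.exp (Real.log (bperm n A)) :=
          (Real.exp_log hppos).symm
      _ ≤ Real.exp (∑ i, (1 / (d i : ℝ)) * Real.log (Nat.factorial (d i))) :=
          Real.exp_le_exp.mpr hlog
      _ = ∏ i, Real.exp ((1 / (d i : ℝ)) * Real.log (Nat.factorial (d i))) :=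
          Real.exp_sum _ _
      _ = ∏ i, (Nat.factorial (d i) : ℝ) ^ (1 / (d i : ℝ)) := by
          refine Finset.prod_congr rfl fun i _ => ?_
          rw [Real.rpow_def_of_pos (by exact_mod_cast (d i).factorial_pos), mul_comm]
end

section
/- Kahn–Lovász theorem: Let G be a (simple) graph on 2n vertices v₁,…,v_{2n} with deg(vᵢ) = dᵢ ≥ 1 for all i. Then the number of perfect matchings of G satisfies |M_perf(G)| ≤ Π_{i=1}^{2n} (dᵢ!)^{1/(2dᵢ)}. -/
/-!
Write `h d = log (d!) / d`, so that the bound reads `log |M_perf(G)| ≤ ½ ∑ᵥ h (deg v)`; we prove it for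
the perfect matchings of every induced subgraph `G[S]`, by induction on `|S|`.

Fix a vertex `v`. The matchings are partitioned according to the partner `u` of `v`, and the class of
`u` is in bijection with the perfect matchings of `G[S ∖ {v, u}]`. Convexity of `x log x` gives
`m log m ≤ m log (deg v) + ∑_M log |M_perf(G[S ∖ {v, M v}])|` with `m = |M_perf(G[S])|`; bound
each term on the right by induction and average over `v`. For a fixed matching `M` and vertex `k`,
deleting the pair `{v, M v}` removes `εᵥ ∈ {0, 1, 2}` neighbours of `k`, with `∑ᵥ εᵥ = 2 deg k - 2`
(summing over `v ∉ {k, M k}`), and the discrete concavity `h (d - 2) + h d ≤ 2 h (d - 1)` turns this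
into `∑ᵥ h (deg k - εᵥ) ≤ |S| h (deg k) - 2 log (deg k)`. The `log (deg k)` terms then cancel.
-/

open Finset

namespace KahnLovasz

open Real Equiv
open scoped Nat

noncomputable def logFactorialRoot (d : ℕ) : ℝ := log d ! / d

lemma natCast_mul_logFactorialRoot (d : ℕ) : d * logFactorialRoot d = log d ! := by
  rcases eq_or_ne d 0 with rfl | hd
  · simp
  · rw [logFactorialRoot, mul_div_cancel₀ _ (by exact_mod_cast hd)]

lemma log_factorial_succ (d : ℕ) : log (d + 1)! = log (d + 1) + log d ! := by
  rw [Nat.factorial_succ, Nat.cast_mul, log_mul (by positivity) (by positivity)]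
  push_cast
  rfl

lemma log_add_log_add_two_le (x : ℝ) (hx : 0 < x) : log x + log (x + 2) ≤ 2 * log (x + 1) := by
  rw [← log_mul hx.ne' (by positivity), two_mul, ← log_mul (by positivity) (by positivity)]
  exact log_le_log (by positivity) (by nlinarith)

/-- `logFactorialRoot_add_two_le` with the denominator `d (d + 1) (d + 2)` cleared. -/
lemma two_mul_log_factorial_le (d : ℕ) :
    2 * log d ! ≤ d * (d + 3) * log (d + 1) - d * (d + 1) * log (d + 2) := by
  induction d with
  | zero => simp
  | succ d ih =>
    have hlog := log_add_log_add_two_le (d + 1) (by positivity)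
    have hstep : 0 ≤ ((d : ℝ) + 1) * (d + 2) * (2 * log (d + 2) - log (d + 1) - log (d + 3)) :=
      mul_nonneg (by positivity) (by ring_nf at hlog ⊢; linarith)
    rw [log_factorial_succ]
    push_cast
    ring_nf at ih hstep ⊢
    linarith

lemma logFactorialRoot_add_two_le {d : ℕ} (hd : 1 ≤ d) :
    logFactorialRoot d + logFactorialRoot (d + 2) ≤ 2 * logFactorialRoot (d + 1) := by
  have hd' : (0 : ℝ) < d := by exact_mod_cast hd
  have h1 : logFactorialRoot (d + 1) = (log (d + 1) + log d !) / (d + 1) := by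
    rw [logFactorialRoot, log_factorial_succ]; push_cast; rfl
  have h2 : logFactorialRoot (d + 2) = (log (d + 2) + log (d + 1) + log d !) / (d + 2) := by
    rw [logFactorialRoot, log_factorial_succ (d + 1), log_factorial_succ]; push_cast; ring_nf
  have hgap : 2 * logFactorialRoot (d + 1) - (logFactorialRoot d + logFactorialRoot (d + 2)) =
      (d * (d + 3) * log (d + 1) - d * (d + 1) * log (d + 2) - 2 * log d !) /
        (d * (d + 1) * (d + 2)) := by
    rw [h1, h2, logFactorialRoot]
    field_simp
    ring
  have := div_nonneg (sub_nonneg.mpr (two_mul_log_factorial_le d))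
    (by positivity : (0 : ℝ) ≤ d * (d + 1) * (d + 2))
  linarith

lemma logFactorialRoot_le_of_le_two {a b : ℕ} (ha : 1 ≤ a) (hb : b ≤ 2) :
    logFactorialRoot a ≤
      logFactorialRoot (a + b) - b * (logFactorialRoot (a + b) - logFactorialRoot (a + b - 1)) := by
  interval_cases b
  · simp
  · simp
  · have := logFactorialRoot_add_two_le ha
    simp only [show a + 2 - 1 = a + 1 by omega]
    push_cast
    linarith

lemma sum_mul_log_sum_le {ι : Type*} (t : Finset ι) (c : ι → ℝ) (hc : ∀ i ∈ t, 0 ≤ c i) :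
    (∑ i ∈ t, c i) * log (∑ i ∈ t, c i) ≤ (∑ i ∈ t, c i) * log #t + ∑ i ∈ t, c i * log (c i) := by
  rcases t.eq_empty_or_nonempty with rfl | ht
  · simp
  have hn : (0 : ℝ) < #t := by exact_mod_cast ht.card_pos
  have jensen := convexOn_mul_log.map_sum_le (t := t) (w := fun _ => (#t : ℝ)⁻¹) (p := c)
    (fun _ _ => by positivity) (by simp [hn.ne']) hc
  simp only [smul_eq_mul, ← mul_sum] at jensen
  have key := mul_le_mul_of_nonneg_left jensen hn.le
  rw [← mul_assoc, ← mul_assoc, ← mul_assoc, mul_inv_cancel₀ hn.ne', one_mul, one_mul] at key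
  have hsplit : (∑ i ∈ t, c i) * log ((#t : ℝ)⁻¹ * ∑ i ∈ t, c i) =
      (∑ i ∈ t, c i) * log (∑ i ∈ t, c i) - (∑ i ∈ t, c i) * log #t := by
    rcases eq_or_ne (∑ i ∈ t, c i) 0 with h0 | h0
    · simp [h0]
    · rw [log_mul (by positivity) h0, log_inv]; ring
  linarith

variable {V : Type*} [DecidableEq V]

lemma _root_.Equiv.Perm.apply_swap_of_apply_eq {σ : Perm V} {v u : V} (hv : σ v = u) (hu : σ u = v)
    (x : V) : σ (swap v u x) = swap v u (σ x) := by
  rw [σ.injective.map_swap, hv, hu, swap_comm]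

lemma _root_.Equiv.Perm.apply_swap_of_fixed {σ : Perm V} {v u : V} (hv : σ v = v) (hu : σ u = u)
    (x : V) : σ (swap v u x) = swap v u (σ x) := by
  rw [σ.injective.map_swap, hv, hu]

/-- A perfect matching of `G[S]`, encoded as the involution of `V` that exchanges the two ends of
each matching edge and fixes every vertex outside `S`. -/
structure IsPerfectMatchingOn (G : SimpleGraph V) (S : Finset V) (σ : Perm V) : Prop where
  involutive : Function.Involutive σ
  adj_apply : ∀ a ∈ S, G.Adj a (σ a)
  apply_of_notMem : ∀ a ∉ S, σ a = a

namespace IsPerfectMatchingOn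

variable {G : SimpleGraph V} {S : Finset V} {σ τ : Perm V} {v u : V}

lemma apply_mem (h : IsPerfectMatchingOn G S σ) (hv : v ∈ S) : σ v ∈ S := by
  by_contra hσv
  have := h.apply_of_notMem _ hσv
  rw [h.involutive v] at this
  exact (h.adj_apply v hv).ne this

lemma pair_subset (h : IsPerfectMatchingOn G S σ) (hv : v ∈ S) : {v, σ v} ⊆ S := by
  simp [insert_subset_iff, hv, h.apply_mem hv]

lemma swap_mul (h : IsPerfectMatchingOn G S σ) (hv : v ∈ S) :
    IsPerfectMatchingOn G (S \ {v, σ v}) (swap v (σ v) * σ) := by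
  have hcomm := Perm.apply_swap_of_apply_eq (σ := σ) rfl (h.involutive v)
  have hσ := h.involutive
  refine ⟨fun x => ?_, fun a ha => ?_, fun a ha => ?_⟩
  · simp [← hcomm, hσ _]
  · simp only [mem_sdiff, mem_insert, mem_singleton, not_or] at ha
    rw [Perm.mul_apply, swap_apply_of_ne_of_ne (by grind [hσ.eq_iff]) (by grind [hσ.injective.ne])]
    exact h.adj_apply a ha.1
  · simp only [mem_sdiff, mem_insert, mem_singleton, not_and_or, not_not] at ha
    rcases ha with ha | rfl | rfl
    · have ha' : σ a = a := h.apply_of_notMem a ha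
      rw [Perm.mul_apply, ha', swap_apply_of_ne_of_ne (by grind) (by grind [h.apply_mem hv])]
    · simp
    · simp [hσ v]

lemma swap_mul_of_adj (h : IsPerfectMatchingOn G (S \ {v, u}) τ) (hvu : G.Adj v u) (hv : v ∈ S)
    (hu : u ∈ S) : IsPerfectMatchingOn G S (swap v u * τ) := by
  have hτv : τ v = v := h.apply_of_notMem v (by simp)
  have hτu : τ u = u := h.apply_of_notMem u (by simp)
  have hcomm := Perm.apply_swap_of_fixed hτv hτu
  have hτ := h.involutive
  refine ⟨fun x => ?_, fun a ha => ?_, fun a ha => ?_⟩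
  · simp [← hcomm, hτ _]
  · by_cases hav : a = v
    · simpa [hav, hτv] using hvu
    by_cases hau : a = u
    · simpa [hau, hτu] using hvu.symm
    have ha' : a ∈ S \ {v, u} := by simp [ha, hav, hau]
    rw [Perm.mul_apply, swap_apply_of_ne_of_ne (by grind [hτ.eq_iff]) (by grind [hτ.eq_iff])]
    exact h.adj_apply a ha'
  · have hav : a ≠ v := by grind
    have hau : a ≠ u := by grind
    rw [Perm.mul_apply, h.apply_of_notMem a (by simp [ha]), swap_apply_of_ne_of_ne hav hau]

end IsPerfectMatchingOn

section degreeIn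

variable (G : SimpleGraph V) [DecidableRel G.Adj]

def degreeIn (S : Finset V) (k : V) : ℕ := #{a ∈ S | G.Adj k a}

variable {G}

lemma degreeIn_sdiff_add_degreeIn {S P : Finset V} (hP : P ⊆ S) (k : V) :
    degreeIn G (S \ P) k + degreeIn G P k = degreeIn G S k := by
  rw [degreeIn, degreeIn, degreeIn, ← card_union_of_disjoint
    (disjoint_filter_filter sdiff_disjoint), ← filter_union, sdiff_union_of_subset hP]

lemma degreeIn_pair_le_two (v u k : V) : degreeIn G {v, u} k ≤ 2 :=
  (card_filter_le _ _).trans card_le_two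

namespace IsPerfectMatchingOn

variable {S : Finset V} {σ : Perm V} {k v : V}

lemma sum_degreeIn_pair_add_two (h : IsPerfectMatchingOn G S σ) (hk : k ∈ S) :
    ∑ v ∈ S \ {k, σ k}, degreeIn G {v, σ v} k + 2 = 2 * degreeIn G S k := by
  have hpair : ∀ v ∈ S, degreeIn G {v, σ v} k =
      (if G.Adj k v then 1 else 0) + if G.Adj k (σ v) then 1 else 0 := fun v hv => by
    rw [degreeIn, card_filter, sum_pair (h.adj_apply v hv).ne]
  have hperm : ∑ v ∈ S, (if G.Adj k (σ v) then 1 else 0) = ∑ v ∈ S, if G.Adj k v then 1 else 0 :=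
    sum_nbij' σ σ (fun _ => h.apply_mem) (fun _ => h.apply_mem) (fun v _ => h.involutive v)
      (fun v _ => h.involutive v) (fun _ _ => rfl)
  have htotal : ∑ v ∈ S, degreeIn G {v, σ v} k = 2 * degreeIn G S k := by
    rw [sum_congr rfl hpair, sum_add_distrib, hperm, degreeIn, card_filter, two_mul]
  have hends : ∑ v ∈ {k, σ k}, degreeIn G {v, σ v} k = 2 := by
    have hadj := h.adj_apply k hk
    rw [sum_pair hadj.ne, hpair k hk, hpair (σ k) (h.apply_mem hk), h.involutive k]
    simp [hadj]
  rwa [← sum_sdiff (h.pair_subset hk), hends] at htotal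

lemma one_le_degreeIn (h : IsPerfectMatchingOn G S σ) (hk : k ∈ S) : 1 ≤ degreeIn G S k :=
  card_pos.mpr ⟨σ k, mem_filter.mpr ⟨h.apply_mem hk, h.adj_apply k hk⟩⟩

lemma one_le_degreeIn_sdiff (h : IsPerfectMatchingOn G S σ) (hk : k ∈ S)
    (hv : v ∈ S \ {k, σ k}) : 1 ≤ degreeIn G (S \ {v, σ v}) k := by
  simp only [mem_sdiff, mem_insert, mem_singleton, not_or] at hv
  refine card_pos.mpr ⟨σ k, mem_filter.mpr ⟨?_, h.adj_apply k hk⟩⟩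
  simp only [mem_sdiff, mem_insert, mem_singleton, not_or, h.apply_mem hk, true_and,
    h.involutive.injective.eq_iff]
  exact ⟨Ne.symm hv.2.2, Ne.symm hv.2.1⟩

lemma sum_logFactorialRoot_degreeIn_le (h : IsPerfectMatchingOn G S σ) (hk : k ∈ S) :
    ∑ v ∈ S \ {k, σ k}, logFactorialRoot (degreeIn G (S \ {v, σ v}) k) ≤
      #S * logFactorialRoot (degreeIn G S k) - 2 * log (degreeIn G S k) := by
  obtain ⟨e, he⟩ : ∃ e, degreeIn G S k = e + 1 :=
    ⟨degreeIn G S k - 1, by have := h.one_le_degreeIn hk; omega⟩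
  have hpoint : ∀ v ∈ S \ {k, σ k}, logFactorialRoot (degreeIn G (S \ {v, σ v}) k) ≤
      logFactorialRoot (e + 1) -
        degreeIn G {v, σ v} k * (logFactorialRoot (e + 1) - logFactorialRoot e) := fun v hv => by
    have hd := degreeIn_sdiff_add_degreeIn (G := G) (h.pair_subset (mem_sdiff.mp hv).1) k
    have := logFactorialRoot_le_of_le_two (h.one_le_degreeIn_sdiff hk hv)
      (degreeIn_pair_le_two (G := G) v (σ v) k)
    rwa [hd, he, Nat.add_sub_cancel] at this
  have hsum : ∑ v ∈ S \ {k, σ k}, (degreeIn G {v, σ v} k : ℝ) = 2 * e := by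
    have := h.sum_degreeIn_pair_add_two hk
    rw [he] at this
    exact_mod_cast (by omega : ∑ v ∈ S \ {k, σ k}, degreeIn G {v, σ v} k = 2 * e)
  have hcard : (#(S \ {k, σ k}) : ℝ) = #S - 2 := by
    have := card_sdiff_add_card_eq_card (h.pair_subset hk)
    rw [card_pair (h.adj_apply k hk).ne] at this
    rw [← this]
    push_cast
    ring
  refine (sum_le_sum hpoint).trans (le_of_eq ?_)
  rw [sum_sub_distrib, sum_const, ← sum_mul, nsmul_eq_mul, hsum, hcard, he]
  have h1 := natCast_mul_logFactorialRoot (e + 1)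
  have h0 := natCast_mul_logFactorialRoot e
  have hsucc := log_factorial_succ e
  push_cast at h1 ⊢
  linear_combination (-2) * h1 + 2 * h0 - 2 * hsucc

lemma sum_sum_logFactorialRoot_degreeIn_le (h : IsPerfectMatchingOn G S σ) :
    ∑ v ∈ S, ∑ k ∈ S \ {v, σ v}, logFactorialRoot (degreeIn G (S \ {v, σ v}) k) ≤
      ∑ k ∈ S, (#S * logFactorialRoot (degreeIn G S k) - 2 * log (degreeIn G S k)) := by
  rw [sum_comm' (t' := S) (s' := fun k => S \ {k, σ k})]
  · exact sum_le_sum fun k hk => h.sum_logFactorialRoot_degreeIn_le hk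
  · intro v k
    have hkv : k = σ v ↔ v = σ k := by rw [eq_comm, h.involutive.eq_iff]
    simp only [mem_sdiff, mem_insert, mem_singleton, not_or, hkv]
    tauto

end IsPerfectMatchingOn

end degreeIn

variable [Fintype V] (G : SimpleGraph V)

noncomputable def perfectMatchingsOn (S : Finset V) : Finset (Perm V) := by
  classical exact {σ | IsPerfectMatchingOn G S σ}

variable {G}

@[simp]
lemma mem_perfectMatchingsOn {S : Finset V} {σ : Perm V} :
    σ ∈ perfectMatchingsOn G S ↔ IsPerfectMatchingOn G S σ := by
  classical simp [perfectMatchingsOn]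

/-- Left multiplication by the transposition `swap v u` deletes, resp. adds, the matching edge `vu`. -/
lemma card_filter_apply_eq {S : Finset V} {v u : V} (hvu : G.Adj v u) (hv : v ∈ S) (hu : u ∈ S) :
    #{σ ∈ perfectMatchingsOn G S | σ v = u} = #(perfectMatchingsOn G (S \ {v, u})) := by
  refine card_nbij' (swap v u * ·) (swap v u * ·) ?_ ?_ ?_ ?_
  · intro σ hσ
    simp only [coe_filter, mem_perfectMatchingsOn, Set.mem_ofPred_eq] at hσ
    obtain ⟨hσ, rfl⟩ := hσ
    simpa using hσ.swap_mul hv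
  · intro τ hτ
    simp only [mem_coe, mem_perfectMatchingsOn] at hτ
    simp only [coe_filter, mem_perfectMatchingsOn, Set.mem_ofPred_eq]
    refine ⟨hτ.swap_mul_of_adj hvu hv hu, ?_⟩
    simp [hτ.apply_of_notMem v (by simp)]
  · intro σ _
    simp
  · intro τ _
    simp

variable (G) in
def subgraphOfInvolution (σ : Perm V) (hσ : IsPerfectMatchingOn G univ σ) : G.Subgraph where
  verts := Set.univ
  Adj a b := σ a = b
  adj_sub := by
    rintro a _ rfl
    exact hσ.adj_apply a (mem_univ a)
  edge_vert _ := Set.mem_univ _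
  symm := ⟨fun a b h => h ▸ hσ.involutive a⟩

lemma natCard_perfectMatching_eq :
    Nat.card {M : G.Subgraph // M.IsPerfectMatching} = #(perfectMatchingsOn G univ) := by
  let f : perfectMatchingsOn G univ → {M : G.Subgraph // M.IsPerfectMatching} := fun σ =>
    ⟨subgraphOfInvolution G σ (mem_perfectMatchingsOn.mp σ.2),
      SimpleGraph.Subgraph.isPerfectMatching_iff.mpr fun v => ⟨σ.1 v, rfl, fun _ h => Eq.symm h⟩⟩
  have hf : Function.Bijective f := by
    refine ⟨fun σ τ h => ?_, fun M => ?_⟩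
    · simp only [f, subgraphOfInvolution, Subtype.mk.injEq, SimpleGraph.Subgraph.mk.injEq,
        true_and] at h
      exact Subtype.ext (Equiv.ext fun a => by simpa using congrFun₂ h a (τ.1 a))
    · obtain ⟨M, hM⟩ := M
      choose p hp using SimpleGraph.Subgraph.isPerfectMatching_iff.mp hM
      have hp_inv : Function.Involutive p := fun v => ((hp (p v)).2 v (hp v).1.symm).symm
      refine ⟨⟨hp_inv.toPerm, mem_perfectMatchingsOn.mpr
        ⟨hp_inv, fun a _ => M.adj_sub (hp a).1, fun a ha => absurd (mem_univ a) ha⟩⟩, ?_⟩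
      refine Subtype.ext (SimpleGraph.Subgraph.ext hM.2.verts_eq_univ.symm ?_)
      ext a b
      exact ⟨by rintro rfl; exact (hp a).1, fun h => ((hp a).2 b h).symm⟩
  rw [← Nat.card_eq_of_bijective f hf, Nat.card_eq_finsetCard]

variable [DecidableRel G.Adj]

lemma mul_log_card_perfectMatchingsOn_le {S : Finset V} {v : V} (hv : v ∈ S) :
    #(perfectMatchingsOn G S) * log #(perfectMatchingsOn G S) ≤
      #(perfectMatchingsOn G S) * log (degreeIn G S v) +
        ∑ σ ∈ perfectMatchingsOn G S, log #(perfectMatchingsOn G (S \ {v, σ v})) := by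
  set P := perfectMatchingsOn G S
  set N : Finset V := {a ∈ S | G.Adj v a}
  have hmaps : ∀ σ ∈ P, σ v ∈ N := fun σ hσ => by
    have hσ := mem_perfectMatchingsOn.mp hσ
    simpa [N] using ⟨hσ.apply_mem hv, hσ.adj_apply v hv⟩
  have hfiber : ∀ u ∈ N, #{σ ∈ P | σ v = u} = #(perfectMatchingsOn G (S \ {v, u})) := by
    intro u hu
    simp only [N, mem_filter] at hu
    exact card_filter_apply_eq hu.2 hv hu.1
  have hcard : (#P : ℝ) = ∑ u ∈ N, (#{σ ∈ P | σ v = u} : ℝ) := by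
    exact_mod_cast card_eq_sum_card_fiberwise hmaps
  have hlog : ∑ u ∈ N, (#{σ ∈ P | σ v = u} : ℝ) * log #{σ ∈ P | σ v = u} =
      ∑ σ ∈ P, log #(perfectMatchingsOn G (S \ {v, σ v})) := by
    rw [← sum_fiberwise_of_maps_to hmaps]
    refine sum_congr rfl fun u hu => ?_
    rw [← nsmul_eq_mul, ← sum_const, hfiber u hu]
    exact sum_congr rfl fun σ hσ => by rw [(mem_filter.mp hσ).2]
  rw [hcard, ← hlog]
  exact sum_mul_log_sum_le N _ fun _ _ => by positivity

theorem log_card_perfectMatchingsOn_le (S : Finset V) (hS : (perfectMatchingsOn G S).Nonempty) :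
    log #(perfectMatchingsOn G S) ≤ 1 / 2 * ∑ k ∈ S, logFactorialRoot (degreeIn G S k) := by
  induction S using Finset.strongInduction with
  | H S ih =>
  rcases S.eq_empty_or_nonempty with rfl | hSne
  · have hle : #(perfectMatchingsOn G ∅) ≤ 1 := card_le_one.mpr fun σ hσ τ hτ => Equiv.ext fun a => by
      rw [(mem_perfectMatchingsOn.mp hσ).apply_of_notMem a (notMem_empty a),
        (mem_perfectMatchingsOn.mp hτ).apply_of_notMem a (notMem_empty a)]
    simpa using log_nonpos (Nat.cast_nonneg _) (by exact_mod_cast hle)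
  set P := perfectMatchingsOn G S
  have hIH : ∀ σ ∈ P, ∀ v ∈ S, log #(perfectMatchingsOn G (S \ {v, σ v})) ≤
      1 / 2 * ∑ k ∈ S \ {v, σ v}, logFactorialRoot (degreeIn G (S \ {v, σ v}) k) := by
    intro σ hσ v hv
    have hσ := mem_perfectMatchingsOn.mp hσ
    exact ih _ (sdiff_ssubset (hσ.pair_subset hv) (by simp))
      ⟨_, mem_perfectMatchingsOn.mpr (hσ.swap_mul hv)⟩
  have hpos : (0 : ℝ) < #S * #P :=
    mul_pos (by exact_mod_cast hSne.card_pos) (by exact_mod_cast hS.card_pos)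
  refine le_of_mul_le_mul_left ?_ hpos
  calc (#S * #P : ℝ) * log #P = ∑ v ∈ S, #P * log #P := by
        rw [sum_const, nsmul_eq_mul]; ring
    _ ≤ ∑ v ∈ S, (#P * log (degreeIn G S v) +
          ∑ σ ∈ P, log #(perfectMatchingsOn G (S \ {v, σ v}))) :=
        sum_le_sum fun v hv => mul_log_card_perfectMatchingsOn_le hv
    _ = #P * ∑ v ∈ S, log (degreeIn G S v) +
          ∑ σ ∈ P, ∑ v ∈ S, log #(perfectMatchingsOn G (S \ {v, σ v})) := by
        rw [sum_add_distrib, mul_sum, sum_comm]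
    _ ≤ #P * ∑ v ∈ S, log (degreeIn G S v) + ∑ σ ∈ P, 1 / 2 *
          ∑ k ∈ S, (#S * logFactorialRoot (degreeIn G S k) - 2 * log (degreeIn G S k)) := by
        gcongr with σ hσ
        calc ∑ v ∈ S, log #(perfectMatchingsOn G (S \ {v, σ v}))
            ≤ ∑ v ∈ S, 1 / 2 *
                ∑ k ∈ S \ {v, σ v}, logFactorialRoot (degreeIn G (S \ {v, σ v}) k) :=
              sum_le_sum (hIH σ hσ)
          _ ≤ _ := by
              rw [← mul_sum]
              exact mul_le_mul_of_nonneg_left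
                (mem_perfectMatchingsOn.mp hσ).sum_sum_logFactorialRoot_degreeIn_le (by norm_num)
    _ = (#S * #P : ℝ) * (1 / 2 * ∑ k ∈ S, logFactorialRoot (degreeIn G S k)) := by
        rw [sum_const, nsmul_eq_mul, sum_sub_distrib, ← mul_sum, ← mul_sum]
        ring

variable (G) in
theorem card_perfectMatching_le :
    (Nat.card {M : G.Subgraph // M.IsPerfectMatching} : ℝ) ≤
      ∏ v, ((G.degree v)! : ℝ) ^ (1 / (2 * G.degree v : ℝ)) := by
  have hprod : ∏ v, ((G.degree v)! : ℝ) ^ (1 / (2 * G.degree v : ℝ)) =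
      exp (1 / 2 * ∑ v, logFactorialRoot (degreeIn G univ v)) := by
    rw [mul_sum, exp_sum]
    refine prod_congr rfl fun v _ => ?_
    rw [rpow_def_of_pos (by positivity), logFactorialRoot, degreeIn,
      ← SimpleGraph.neighborFinset_eq_filter, SimpleGraph.card_neighborFinset_eq_degree]
    ring_nf
  rw [natCard_perfectMatching_eq, hprod]
  rcases (perfectMatchingsOn G univ).eq_empty_or_nonempty with hempty | hne
  · simpa [hempty] using (exp_pos _).le
  · rw [← exp_log (x := #(perfectMatchingsOn G univ)) (by exact_mod_cast hne.card_pos)]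
    exact exp_le_exp.mpr (log_card_perfectMatchingsOn_le univ hne)

end KahnLovasz

theorem kahn_lovasz_general (n : ℕ) (G : SimpleGraph (Fin (2 * n))) [DecidableRel G.Adj] :
    (Nat.card {M : G.Subgraph // M.IsPerfectMatching} : ℝ) ≤
      ∏ i, (Nat.factorial (G.degree i) : ℝ) ^ (1 / (2 * (G.degree i) : ℝ)) :=
  KahnLovasz.card_perfectMatching_le G

/-- Kahn–Lovász theorem: a graph on `2n` vertices with degrees `dᵢ ≥ 1` has at most
`Π (dᵢ!)^{1/(2dᵢ)}` perfect matchings. -/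
theorem kahn_lovasz (n : ℕ) (G : SimpleGraph (Fin (2 * n))) [DecidableRel G.Adj]
    (hd : ∀ i, 1 ≤ G.degree i) :
    (Nat.card {M : G.Subgraph // M.IsPerfectMatching} : ℝ) ≤
      ∏ i, (Nat.factorial (G.degree i) : ℝ) ^ (1 / (2 * (G.degree i) : ℝ)) :=
  kahn_lovasz_general n G
end

section
/- For d ≥ 2, n ≥ d+1, and q ≥ 2, if G is any n-vertex d-regular bipartite graph, then the number of proper q-colorings satisfies c_q(G) ≤ c_q(K_{d,d})^{n/(2d)}, i.e., c_q(G)^{2d} ≤ c_q(K_{d,d})ⁿ. -/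
/-!
Let `C` be the set of proper `q`-colourings and `H(S)` the entropy of the restriction to `S` of a
uniformly random element of `C`, so that `H(V) = log |C|`. Fix one side `B` of the bipartition and
let `A` be the other. The chain rule together with submodularity gives
`H(V) ≤ H(A) + ∑_{v ∈ B} H(v | N(v))`, and Shearer's lemma (every vertex of `A` lies in `d` of
the neighbourhoods `N(v)`, `v ∈ B`) gives `d H(A) ≤ ∑_{v ∈ B} H(N(v))`. Hence
`d H(V) ≤ ∑_{v ∈ B} (H(N(v)) + d H(v | N(v)))`. By Gibbs' inequality each summand is at most
`log ∑_ψ t(ψ)^d`, where `ψ` runs over the colourings of `N(v)` and `t(ψ)` is the number of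
colours missing from `ψ`; this sum counts the colourings of `K_{d,d}`. Adding the bounds for the
two sides gives `2d log |C| ≤ n log c_q(K_{d,d})`.
-/

open Finset Real SimpleGraph

namespace GalvinTetali

theorem sum_log_nonpos {ι : Type*} {s : Finset ι} {x : ι → ℝ} (hx : ∀ i ∈ s, 0 < x i)
    (hs : ∑ i ∈ s, x i ≤ #s) : ∑ i ∈ s, log (x i) ≤ 0 :=
  calc ∑ i ∈ s, log (x i) ≤ ∑ i ∈ s, (x i - 1) :=
        sum_le_sum fun i hi => log_le_sub_one_of_pos (hx i hi)
    _ ≤ 0 := by simpa [sum_sub_distrib] using hs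

theorem sum_div_card_filter_eq {α β : Type*} [DecidableEq β] (s : Finset α) (c : α → β)
    (φ : β → ℝ) :
    ∑ a ∈ s, φ (c a) / #{b ∈ s | c b = c a} = ∑ b ∈ s.image c, φ b := by
  refine (sum_image' _ fun a ha => ?_).symm
  have hpos : (0 : ℝ) < #{b ∈ s | c b = c a} := by
    exact_mod_cast card_pos.2 ⟨a, by simp [ha]⟩
  rw [sum_congr rfl fun b hb => by rw [(mem_filter.1 hb).2], sum_const, nsmul_eq_mul,
    mul_div_cancel₀ _ hpos.ne']

theorem pow_le_pow_of_mul_log_le {a b m k : ℕ} (hb : 0 < b)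
    (h : (m : ℝ) * (a * log a) ≤ k * (a * log b)) : a ^ m ≤ b ^ k := by
  rcases Nat.eq_zero_or_pos a with rfl | ha
  · exact (pow_le_one₀ le_rfl zero_le_one).trans (Nat.one_le_pow _ _ hb)
  have ha' : (0 : ℝ) < a := by exact_mod_cast ha
  have hlog : log ((a : ℝ) ^ m) ≤ log ((b : ℝ) ^ k) := by
    rw [log_pow, log_pow]
    exact le_of_mul_le_mul_left (by linarith) ha'
  exact_mod_cast (log_le_log_iff (by positivity) (by positivity)).1 hlog

theorem card_coloring_eq_card_filter {V K : Type*} [Fintype V] [DecidableEq V] [Fintype K]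
    [DecidableEq K] (G : SimpleGraph V) [DecidableRel G.Adj] :
    Nat.card (G.Coloring K) = #{f : V → K | ∀ v w, G.Adj v w → f v ≠ f w} := by
  let e : G.Coloring K ≃ {f : V → K // ∀ v w, G.Adj v w → f v ≠ f w} :=
    { toFun := fun c => ⟨c, fun _ _ h => c.valid h⟩
      invFun := fun f => Coloring.mk f.1 (f.2 _ _)
      left_inv := fun _ => rfl
      right_inv := fun _ => rfl }
  rw [Nat.card_congr e, Nat.card_eq_fintype_card, Fintype.card_subtype]

theorem card_coloring_completeBipartiteGraph (α β K : Type*) [Fintype α] [DecidableEq α]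
    [Fintype β] [DecidableEq β] [Fintype K] [DecidableEq K] :
    Nat.card ((completeBipartiteGraph α β).Coloring K) =
      ∑ g : α → K, #{k | ∀ a, g a ≠ k} ^ Fintype.card β := by
  let e : (completeBipartiteGraph α β).Coloring K ≃
      Σ g : α → K, (β → {k // ∀ a, g a ≠ k}) :=
    { toFun := fun c =>
        ⟨c ∘ Sum.inl, fun b => ⟨c (Sum.inr b), fun a => c.valid (by simp)⟩⟩
      invFun := fun p => Coloring.mk (Sum.elim p.1 fun b => p.2 b) (by
        rintro (a | b) (a' | b') h
        · simp at h
        · exact (p.2 b').2 a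
        · exact fun h' => (p.2 b).2 a' h'.symm
        · simp at h)
      left_inv := fun c => by ext (a | b) <;> rfl
      right_inv := fun _ => rfl }
  rw [Nat.card_congr e, Nat.card_eq_fintype_card, Fintype.card_sigma]
  simp [Fintype.card_subtype]

variable {V K : Type*} [DecidableEq K]

def fiber (C : Finset (V → K)) (S : Finset V) (f : V → K) : Finset (V → K) :=
  {g ∈ C | ∀ x ∈ S, g x = f x}

/-- `#C` times the Shannon entropy (in nats) of the restriction to `S` of a uniformly random
element of `C`. -/
noncomputable def entropy (C : Finset (V → K)) (S : Finset V) : ℝ :=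
  ∑ f ∈ C, (log #C - log #(fiber C S f))

variable {C : Finset (V → K)} {S T : Finset V} {f g : V → K}

theorem mem_fiber : g ∈ fiber C S f ↔ g ∈ C ∧ ∀ x ∈ S, g x = f x := mem_filter

theorem fiber_subset : fiber C S f ⊆ C := filter_subset _ _

theorem mem_fiber_self (hf : f ∈ C) : f ∈ fiber C S f := mem_fiber.2 ⟨hf, fun _ _ => rfl⟩

theorem card_fiber_pos (hf : f ∈ C) : (0 : ℝ) < #(fiber C S f) := by
  exact_mod_cast card_pos.2 ⟨f, mem_fiber_self hf⟩

theorem mem_fiber_comm : g ∈ fiber C S f ∧ f ∈ C ↔ f ∈ fiber C S g ∧ g ∈ C := by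
  simp only [mem_fiber]
  grind

theorem fiber_eq_of_mem (h : g ∈ fiber C S f) : fiber C S g = fiber C S f := by
  ext k
  simp only [mem_fiber] at h ⊢
  grind

theorem fiber_anti (h : S ⊆ T) : fiber C T f ⊆ fiber C S f :=
  fun _ hg => mem_fiber.2 ⟨(mem_fiber.1 hg).1, fun x hx => (mem_fiber.1 hg).2 x (h hx)⟩

theorem fiber_insert [DecidableEq V] (v : V) :
    fiber C (insert v S) f = {g ∈ fiber C S f | g v = f v} := by
  ext g
  simp only [mem_filter, mem_fiber, forall_mem_insert]
  tauto

theorem entropy_empty : entropy C ∅ = 0 := by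
  simp [entropy, fiber]

theorem entropy_univ [Fintype V] : entropy C univ = #C * log #C := by
  have hsingle : ∀ f ∈ C, fiber C univ f = {f} := fun f hf =>
    eq_singleton_iff_unique_mem.2 ⟨mem_fiber_self hf,
      fun g hg => funext fun x => (mem_fiber.1 hg).2 x (mem_univ x)⟩
  rw [entropy, sum_congr rfl fun f hf => by rw [hsingle f hf, card_singleton, Nat.cast_one,
    log_one, sub_zero], sum_const, nsmul_eq_mul]

theorem entropy_mono (h : S ⊆ T) : entropy C S ≤ entropy C T :=
  sum_le_sum fun _ hf => sub_le_sub_left (log_le_log (card_fiber_pos hf)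
    (by exact_mod_cast card_le_card (fiber_anti h))) _

theorem sum_sum_fiber_div_card (S : Finset V) (φ : (V → K) → ℝ) :
    ∑ g ∈ C, ∑ f ∈ fiber C S g, φ f / #(fiber C S f) = ∑ f ∈ C, φ f := by
  rw [sum_comm' fun g f => and_comm.trans mem_fiber_comm]
  refine sum_congr rfl fun f hf => ?_
  rw [sum_const, nsmul_eq_mul, mul_div_cancel₀ _ (card_fiber_pos hf).ne']

theorem entropy_add_sum_log_le (S : Finset V) {u : (V → K) → ℝ} (hu : ∀ f ∈ C, 0 < u f) :
    entropy C S + ∑ f ∈ C, log (u f) ≤ #C * log (∑ f ∈ C, u f / #(fiber C S f)) := by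
  rcases C.eq_empty_or_nonempty with rfl | hC
  · simp [entropy]
  have hN : ∀ f ∈ C, (0 : ℝ) < #(fiber C S f) := fun f hf => card_fiber_pos hf
  set M := ∑ f ∈ C, u f / #(fiber C S f)
  have hM : 0 < M := sum_pos (fun f hf => div_pos (hu f hf) (hN f hf)) hC
  have hCpos : (0 : ℝ) < #C := by exact_mod_cast hC.card_pos
  have hsum : ∑ f ∈ C, #C * u f / (#(fiber C S f) * M) = #C := by
    rw [sum_congr rfl fun f _ => show #C * u f / (#(fiber C S f) * M) =
      #C / M * (u f / #(fiber C S f)) by ring, ← mul_sum, div_mul_cancel₀ _ hM.ne']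
  have hlog := sum_log_nonpos (fun f hf => div_pos (mul_pos hCpos (hu f hf))
    (mul_pos (hN f hf) hM)) hsum.le
  rw [sum_congr rfl fun f hf => by
    rw [log_div (mul_pos hCpos (hu f hf)).ne' (mul_pos (hN f hf) hM).ne',
      log_mul hCpos.ne' (hu f hf).ne', log_mul (hN f hf).ne' hM.ne']] at hlog
  simp only [entropy, sum_sub_distrib, sum_add_distrib, sum_const, nsmul_eq_mul] at hlog ⊢
  linarith

section Submodularity

variable [DecidableEq V]

/-- For fixed `g` and `h` the inner sum runs over a single `(S ∪ T)`-class, and it is empty unless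
`h` agrees with `g` on `S ∩ T`. -/
theorem sum_sum_inv_card_fiber_le_one (S T : Finset V) (hg : g ∈ C) :
    ∑ h ∈ C, ∑ f ∈ {f ∈ fiber C S g | ∀ x ∈ T, f x = h x},
      ((#(fiber C (S ∪ T) f) : ℝ) * #(fiber C (S ∩ T) f))⁻¹ ≤ 1 := by
  set Q : (V → K) → Finset (V → K) := fun h => {f ∈ fiber C S g | ∀ x ∈ T, f x = h x}
  have hQ : ∀ h, ∀ f ∈ Q h, fiber C (S ∪ T) f = Q h ∧ f ∈ fiber C (S ∩ T) g := by
    intro h f hf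
    simp only [Q, mem_filter, mem_fiber] at hf
    refine ⟨?_, mem_fiber.2 ⟨hf.1.1, fun x hx => hf.1.2 x (mem_inter.1 hx).1⟩⟩
    ext k
    simp only [Q, mem_filter, mem_fiber, mem_union]
    grind
  have hbound : ∀ h,
      ∑ f ∈ Q h, ((#(fiber C (S ∪ T) f) : ℝ) * #(fiber C (S ∩ T) f))⁻¹ ≤
        (#(fiber C (S ∩ T) g) : ℝ)⁻¹ := by
    intro h
    rw [sum_congr rfl fun f hf => by rw [(hQ h f hf).1, fiber_eq_of_mem (hQ h f hf).2],
      sum_const, nsmul_eq_mul, mul_inv, ← mul_assoc]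
    rcases (Q h).eq_empty_or_nonempty with hQe | hQne
    · simp [hQe]
    · rw [mul_inv_cancel₀ (by exact_mod_cast hQne.card_pos.ne'), one_mul]
  have hzero : ∀ h ∈ C, h ∉ fiber C (S ∩ T) g →
      ∑ f ∈ Q h, ((#(fiber C (S ∪ T) f) : ℝ) * #(fiber C (S ∩ T) f))⁻¹ = 0 := by
    refine fun h hh hI => sum_eq_zero fun f hf => absurd (mem_fiber.2 ⟨hh, fun x hx => ?_⟩) hI
    simp only [Q, mem_filter, mem_fiber] at hf
    rw [← hf.2 x (mem_inter.1 hx).2, hf.1.2 x (mem_inter.1 hx).1]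
  calc _ = ∑ h ∈ fiber C (S ∩ T) g, ∑ f ∈ Q h,
          ((#(fiber C (S ∪ T) f) : ℝ) * #(fiber C (S ∩ T) f))⁻¹ :=
        (sum_subset fiber_subset hzero).symm
    _ ≤ ∑ h ∈ fiber C (S ∩ T) g, (#(fiber C (S ∩ T) g) : ℝ)⁻¹ :=
        sum_le_sum fun h _ => hbound h
    _ = 1 := by rw [sum_const, nsmul_eq_mul, mul_inv_cancel₀ (card_fiber_pos hg).ne']

-- Expand the numerator as the number of pairs `(g, h)` agreeing with `f` on `S` and on `T`
-- respectively, then sum over `f` last.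
theorem sum_card_fiber_mul_div_le (S T : Finset V) :
    ∑ f ∈ C, (#(fiber C S f) * #(fiber C T f) : ℝ) /
      (#(fiber C (S ∪ T) f) * #(fiber C (S ∩ T) f)) ≤ #C := by
  set w : (V → K) → ℝ := fun f =>
    ((#(fiber C (S ∪ T) f) : ℝ) * #(fiber C (S ∩ T) f))⁻¹
  calc _ = ∑ f ∈ C, ∑ g ∈ fiber C S f, ∑ h ∈ fiber C T f, w f := by
        refine sum_congr rfl fun f _ => ?_
        simp only [sum_const, nsmul_eq_mul, w]
        ring
    _ = ∑ g ∈ C, ∑ h ∈ C, ∑ f ∈ {f ∈ fiber C S g | ∀ x ∈ T, f x = h x}, w f := by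
        rw [sum_comm' fun f g => and_comm.trans mem_fiber_comm]
        refine sum_congr rfl fun g _ => sum_comm' fun f h => ?_
        simp only [mem_filter, mem_fiber]
        grind
    _ ≤ ∑ g ∈ C, 1 := sum_le_sum fun g hg => sum_sum_inv_card_fiber_le_one S T hg
    _ = #C := by simp

theorem entropy_union_add_inter_le (S T : Finset V) :
    entropy C (S ∪ T) + entropy C (S ∩ T) ≤ entropy C S + entropy C T := by
  have hpos : ∀ f ∈ C, ∀ S : Finset V, (0 : ℝ) < #(fiber C S f) :=
    fun _ hf _ => card_fiber_pos hf
  have hlog := sum_log_nonpos (fun f hf => div_pos (mul_pos (hpos f hf S) (hpos f hf T))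
    (mul_pos (hpos f hf _) (hpos f hf _))) (sum_card_fiber_mul_div_le (C := C) S T)
  rw [sum_congr rfl fun f hf => by
    rw [log_div (mul_pos (hpos f hf S) (hpos f hf T)).ne'
      (mul_pos (hpos f hf _) (hpos f hf _)).ne', log_mul (hpos f hf S).ne' (hpos f hf T).ne',
      log_mul (hpos f hf _).ne' (hpos f hf _).ne']] at hlog
  simp only [entropy, sum_add_distrib, sum_sub_distrib] at hlog ⊢
  linarith

theorem entropy_insert_sub_le (h : S ⊆ T) (v : V) :
    entropy C (insert v T) - entropy C T ≤ entropy C (insert v S) - entropy C S := by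
  have hsub := entropy_union_add_inter_le (C := C) (insert v S) T
  rw [insert_union, union_eq_right.2 h] at hsub
  have hmono := entropy_mono (C := C) (subset_inter (subset_insert v S) h)
  linarith

theorem entropy_union_le_add_sum (N : V → Finset V) {A B : Finset V}
    (hN : ∀ v ∈ B, N v ⊆ A) :
    entropy C (A ∪ B) ≤
      entropy C A + ∑ v ∈ B, (entropy C (insert v (N v)) - entropy C (N v)) := by
  induction B using Finset.induction_on with
  | empty => simp
  | insert v B hv ih =>
    rw [union_insert, sum_insert hv]
    have hstep := entropy_insert_sub_le (C := C) ((hN v (mem_insert_self v B)).trans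
      (subset_union_left (s₂ := B))) v
    linarith [ih fun w hw => hN w (mem_insert_of_mem hw)]

end Submodularity

section Shearer

variable [LinearOrder V]

theorem entropy_eq_sum_insert_sub (S : Finset V) :
    entropy C S =
      ∑ x ∈ S, (entropy C (insert x {y ∈ S | y < x}) - entropy C {y ∈ S | y < x}) := by
  induction S using Finset.induction_on_max with
  | empty => simp [entropy_empty]
  | insert a S ha ih =>
    have hbelow_a : {y ∈ insert a S | y < a} = S := by
      ext y
      simp only [mem_filter, mem_insert]
      grind
    have hbelow : ∀ x ∈ S, {y ∈ insert a S | y < x} = {y ∈ S | y < x} := by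
      intro x hx
      ext y
      simp only [mem_filter, mem_insert]
      grind
    rw [sum_insert fun h => lt_irrefl a (ha a h), hbelow_a,
      sum_congr rfl fun x hx => by rw [hbelow x hx], ← ih]
    ring

theorem sum_insert_sub_le_entropy {A S : Finset V} (hSA : S ⊆ A) :
    ∑ x ∈ S, (entropy C (insert x {y ∈ A | y < x}) - entropy C {y ∈ A | y < x}) ≤
      entropy C S := by
  rw [entropy_eq_sum_insert_sub S]
  exact sum_le_sum fun x _ => entropy_insert_sub_le (filter_subset_filter _ hSA) x

theorem mul_entropy_le_sum_entropy (N : V → Finset V) {A B : Finset V} {d : ℕ}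
    (hN : ∀ v ∈ B, N v ⊆ A) (hdeg : ∀ x ∈ A, d ≤ #{v ∈ B | x ∈ N v}) :
    d * entropy C A ≤ ∑ v ∈ B, entropy C (N v) := by
  set δ : V → ℝ := fun x =>
    entropy C (insert x {y ∈ A | y < x}) - entropy C {y ∈ A | y < x}
  calc d * entropy C A = ∑ x ∈ A, d * δ x := by rw [entropy_eq_sum_insert_sub, mul_sum]
    _ ≤ ∑ x ∈ A, #{v ∈ B | x ∈ N v} * δ x :=
        sum_le_sum fun x hx => mul_le_mul_of_nonneg_right (by exact_mod_cast hdeg x hx)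
          (sub_nonneg.2 (entropy_mono (subset_insert _ _)))
    _ = ∑ v ∈ B, ∑ x ∈ N v, δ x := by
        rw [sum_comm' (t' := A) (s' := fun x => {v ∈ B | x ∈ N v}) fun v x => by
          simp only [mem_filter]
          grind]
        simp only [sum_const, nsmul_eq_mul]
    _ ≤ ∑ v ∈ B, entropy C (N v) := sum_le_sum fun v hv => sum_insert_sub_le_entropy (hN v hv)

theorem mul_entropy_union_le (N : V → Finset V) {A B : Finset V} {d : ℕ}
    (hN : ∀ v ∈ B, N v ⊆ A) (hdeg : ∀ x ∈ A, d ≤ #{v ∈ B | x ∈ N v}) :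
    d * entropy C (A ∪ B) ≤
      ∑ v ∈ B, (entropy C (N v) + d * (entropy C (insert v (N v)) - entropy C (N v))) := by
  have hchain := mul_le_mul_of_nonneg_left (entropy_union_le_add_sum (C := C) N hN)
    (Nat.cast_nonneg d)
  rw [sum_add_distrib, ← mul_sum]
  linarith [mul_entropy_le_sum_entropy (C := C) N hN hdeg]

end Shearer

section LocalBound

variable [DecidableEq V]

theorem entropy_insert_sub_le_sum_log (S : Finset V) (v : V) :
    entropy C (insert v S) - entropy C S ≤ ∑ f ∈ C, log #((fiber C S f).image (· v)) := by
  set t : (V → K) → ℝ := fun f => #((fiber C S f).image (· v))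
  have hN : ∀ f ∈ C, ∀ S : Finset V, (0 : ℝ) < #(fiber C S f) :=
    fun _ hf _ => card_fiber_pos hf
  have ht : ∀ f ∈ C, 0 < t f := fun f hf => by
    simpa [t] using ⟨f, mem_fiber_self hf⟩
  have hsum : ∑ f ∈ C, (#(fiber C S f) : ℝ) / (#(fiber C (insert v S) f) * t f) = #C := by
    calc _ = ∑ g ∈ C, ∑ f ∈ fiber C S g,
            (#(fiber C S f) : ℝ) / (#(fiber C (insert v S) f) * t f) / #(fiber C S f) :=
          (sum_sum_fiber_div_card S _).symm
      _ = ∑ g ∈ C, (t g)⁻¹ *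
            ∑ f ∈ fiber C S g, (1 : ℝ) / #{k ∈ fiber C S g | k v = f v} := by
          refine sum_congr rfl fun g hg => ?_
          rw [mul_sum]
          refine sum_congr rfl fun f hf => ?_
          have := hN g hg S
          simp only [t, fiber_insert, fiber_eq_of_mem hf]
          field_simp
      _ = ∑ g ∈ C, 1 := by
          refine sum_congr rfl fun g hg => ?_
          rw [sum_div_card_filter_eq (fiber C S g) (· v) fun _ => 1, sum_const, nsmul_eq_mul,
            mul_one]
          exact inv_mul_cancel₀ (ht g hg).ne'
      _ = #C := by simp
  have hlog := sum_log_nonpos (fun f hf => div_pos (hN f hf S)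
    (mul_pos (hN f hf (insert v S)) (ht f hf))) hsum.le
  rw [sum_congr rfl fun f hf => by
    rw [log_div (hN f hf S).ne' (mul_pos (hN f hf _) (ht f hf)).ne',
      log_mul (hN f hf _).ne' (ht f hf).ne']] at hlog
  simp only [entropy, sum_sub_distrib, sum_add_distrib] at hlog ⊢
  linarith

theorem entropy_add_mul_insert_sub_le (S : Finset V) (v : V) (d : ℕ) :
    entropy C S + d * (entropy C (insert v S) - entropy C S) ≤
      #C * log (∑ f ∈ C, (#((fiber C S f).image (· v)) : ℝ) ^ d / #(fiber C S f)) := by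
  have hcond := mul_le_mul_of_nonneg_left (entropy_insert_sub_le_sum_log (C := C) S v)
    (Nat.cast_nonneg d)
  have hgibbs := entropy_add_sum_log_le (C := C) S
    (u := fun f => (#((fiber C S f).image (· v)) : ℝ) ^ d) fun f hf => by
      have : (fiber C S f).Nonempty := ⟨f, mem_fiber_self hf⟩
      positivity
  simp only [log_pow, ← mul_sum] at hgibbs
  linarith

end LocalBound

section Colorings

variable [Fintype K]

theorem sum_pow_div_card_fiber_le {S : Finset V} {v : V}
    (hC : ∀ f ∈ C, ∀ x ∈ S, f v ≠ f x) :
    ∑ f ∈ C, (#((fiber C S f).image (· v)) : ℝ) ^ #S / #(fiber C S f) ≤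
      Nat.card ((completeBipartiteGraph (Fin #S) (Fin #S)).Coloring K) := by
  set ρ : (V → K) → Fin #S → K := fun f i => f (S.equivFin.symm i)
  have hfiber : ∀ f, fiber C S f = {g ∈ C | ρ g = ρ f} := by
    intro f
    ext g
    rw [mem_fiber, mem_filter, funext_iff,
      ← S.equivFin.forall_congr_left (p := fun x : S => g x = f x), Subtype.forall]
  have havail : ∀ f ∈ C, #((fiber C S f).image (· v)) ≤ #{k | ∀ i, ρ f i ≠ k} := by
    refine fun f hf => card_le_card fun k hk => ?_
    obtain ⟨g, hg, rfl⟩ := mem_image.1 hk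
    simp only [mem_filter, mem_univ, true_and, ρ]
    intro i
    rw [← (mem_fiber.1 hg).2 _ (S.equivFin.symm i).2]
    exact (hC g (mem_fiber.1 hg).1 _ (S.equivFin.symm i).2).symm
  -- Weighting by `1 / #(fiber C S f)` counts each colouring of `S` once.
  calc _ ≤ ∑ f ∈ C, (#{k | ∀ i, ρ f i ≠ k} : ℝ) ^ #S / #{g ∈ C | ρ g = ρ f} :=
        sum_le_sum fun f hf => by
          rw [← hfiber]
          gcongr ?_ ^ _ / _
          exact_mod_cast havail f hf
    _ = ∑ g ∈ C.image ρ, (#{k | ∀ i, g i ≠ k} : ℝ) ^ #S :=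
        sum_div_card_filter_eq C ρ fun g => (#{k | ∀ i, g i ≠ k} : ℝ) ^ #S
    _ ≤ ∑ g : Fin #S → K, (#{k | ∀ i, g i ≠ k} : ℝ) ^ #S :=
        sum_le_sum_of_subset_of_nonneg (subset_univ _) fun _ _ _ => by positivity
    _ = _ := by
        rw [card_coloring_completeBipartiteGraph]
        simp

theorem entropy_add_mul_insert_sub_le_log_card_coloring [DecidableEq V] {S : Finset V} {v : V}
    (hC : ∀ f ∈ C, ∀ x ∈ S, f v ≠ f x) :
    entropy C S + #S * (entropy C (insert v S) - entropy C S) ≤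
      #C * log (Nat.card ((completeBipartiteGraph (Fin #S) (Fin #S)).Coloring K)) := by
  refine (entropy_add_mul_insert_sub_le S v #S).trans ?_
  rcases C.eq_empty_or_nonempty with rfl | hCne
  · simp
  have hpos : 0 < ∑ f ∈ C, (#((fiber C S f).image (· v)) : ℝ) ^ #S / #(fiber C S f) :=
    sum_pos (fun f hf => by
      have : (fiber C S f).Nonempty := ⟨f, mem_fiber_self hf⟩
      positivity) hCne
  exact mul_le_mul_of_nonneg_left (log_le_log hpos (sum_pow_div_card_fiber_le hC))
    (Nat.cast_nonneg _)

theorem mul_entropy_univ_le [Fintype V] [LinearOrder V] (G : SimpleGraph V) [DecidableRel G.Adj]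
    {d : ℕ} (hreg : G.IsRegularOfDegree d) (col : G.Coloring (Fin 2)) (i : Fin 2)
    (hC : ∀ f ∈ C, ∀ v w, G.Adj v w → f v ≠ f w) :
    d * entropy C univ ≤ #{v | col v = i} *
      (#C * log (Nat.card ((completeBipartiteGraph (Fin d) (Fin d)).Coloring K))) := by
  set B : Finset V := {v | col v = i}
  set A : Finset V := {v | ¬col v = i}
  have hN : ∀ v ∈ B, G.neighborFinset v ⊆ A := fun v hv w hw => by
    simp only [B, A, mem_filter, mem_univ, true_and, mem_neighborFinset] at hv hw ⊢
    exact fun h => col.valid hw (hv.trans h.symm)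
  have hdeg : ∀ x ∈ A, d ≤ #{v ∈ B | x ∈ G.neighborFinset v} := fun x hx => by
    rw [← hreg x, ← card_neighborFinset_eq_degree]
    refine card_le_card fun w hw => ?_
    simp only [B, A, mem_filter, mem_univ, true_and, mem_neighborFinset] at hx hw ⊢
    have := col.valid hw
    exact ⟨by omega, hw.symm⟩
  have hlocal : ∀ v ∈ B, entropy C (G.neighborFinset v) + d * (entropy C (insert v
      (G.neighborFinset v)) - entropy C (G.neighborFinset v)) ≤
      #C * log (Nat.card ((completeBipartiteGraph (Fin d) (Fin d)).Coloring K)) := fun v _ => by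
    have := entropy_add_mul_insert_sub_le_log_card_coloring (C := C) (S := G.neighborFinset v)
      (v := v) fun f hf x hx => hC f hf v x ((mem_neighborFinset _ _ _).1 hx)
    rwa [card_neighborFinset_eq_degree, hreg v] at this
  calc d * entropy C univ = d * entropy C (A ∪ B) := by
        rw [union_comm, filter_union_filter_not_eq]
    _ ≤ ∑ v ∈ B, (entropy C (G.neighborFinset v) + d * (entropy C (insert v
          (G.neighborFinset v)) - entropy C (G.neighborFinset v))) :=
        mul_entropy_union_le (fun v => G.neighborFinset v) hN hdeg
    _ ≤ ∑ v ∈ B, #C * log (Nat.card ((completeBipartiteGraph (Fin d) (Fin d)).Coloring K)) :=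
        sum_le_sum hlocal
    _ = _ := by rw [sum_const, nsmul_eq_mul]

theorem card_pow_le_card_coloring_pow [Fintype V] [LinearOrder V] [Nontrivial K]
    (G : SimpleGraph V) [DecidableRel G.Adj] {d : ℕ} (hreg : G.IsRegularOfDegree d)
    (hbip : G.Colorable 2) (hC : ∀ f ∈ C, ∀ v w, G.Adj v w → f v ≠ f w) :
    #C ^ (2 * d) ≤
      Nat.card ((completeBipartiteGraph (Fin d) (Fin d)).Coloring K) ^ Fintype.card V := by
  obtain ⟨col⟩ := hbip
  set cK := Nat.card ((completeBipartiteGraph (Fin d) (Fin d)).Coloring K)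
  have hcK : 0 < cK := by
    obtain ⟨k₁, k₂, hk⟩ := exists_pair_ne K
    have : Nonempty ((completeBipartiteGraph (Fin d) (Fin d)).Coloring K) :=
      ⟨Coloring.mk (Sum.elim (fun _ => k₁) fun _ => k₂) (by
        rintro (a | a) (b | b) h <;> simp_all [hk.symm])⟩
    exact Nat.card_pos
  -- Adding the bounds for both sides avoids having to show that the sides have equal size.
  have hsides : ∑ i : Fin 2, (d : ℝ) * entropy C univ ≤
      ∑ i : Fin 2, #{v | col v = i} * (#C * log cK) :=
    sum_le_sum fun i _ => mul_entropy_univ_le G hreg col i hC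
  have hparts : ∑ i : Fin 2, (#{v | col v = i} : ℝ) = Fintype.card V := by
    rw [← Nat.cast_sum, ← card_eq_sum_card_fiberwise fun v _ => mem_univ (col v), card_univ]
  rw [sum_const, ← sum_mul, hparts, entropy_univ, card_univ, Fintype.card_fin,
    nsmul_eq_mul] at hsides
  exact pow_le_pow_of_mul_log_le hcK (by push_cast at hsides ⊢; linarith)

theorem card_coloring_pow_le [Fintype V] [LinearOrder V] [Nontrivial K] (G : SimpleGraph V)
    [DecidableRel G.Adj] {d : ℕ} (hreg : G.IsRegularOfDegree d) (hbip : G.Colorable 2) :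
    Nat.card (G.Coloring K) ^ (2 * d) ≤
      Nat.card ((completeBipartiteGraph (Fin d) (Fin d)).Coloring K) ^ Fintype.card V := by
  rw [card_coloring_eq_card_filter]
  exact card_pow_le_card_coloring_pow G hreg hbip fun f hf => (mem_filter.1 hf).2

end Colorings

end GalvinTetali

theorem colorings_le_Kdd_general (d n q : ℕ) (hq : 2 ≤ q)
    (G : SimpleGraph (Fin n)) [DecidableRel G.Adj] (hreg : G.IsRegularOfDegree d) (hbip : G.Colorable 2) :
    (Nat.card (G.Coloring (Fin q))) ^ (2 * d) ≤
      (Nat.card ((completeBipartiteGraph (Fin d) (Fin d)).Coloring (Fin q))) ^ n := by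
  have : Nontrivial (Fin q) := Fin.nontrivial_iff_two_le.2 hq
  simpa using GalvinTetali.card_coloring_pow_le (K := Fin q) G hreg hbip

/-- Galvin–Tetali: for `d ≥ 2`, `n ≥ d+1`, `q ≥ 2`, an `n`-vertex `d`-regular bipartite
graph `G` satisfies `c_q(G)^{2d} ≤ c_q(K_{d,d})ⁿ`, where `c_q` counts proper `q`-colorings. -/
theorem colorings_le_Kdd (d n q : ℕ) (hd : 2 ≤ d) (hn : d + 1 ≤ n) (hq : 2 ≤ q)
    (G : SimpleGraph (Fin n)) [DecidableRel G.Adj] (hreg : G.IsRegularOfDegree d) (hbip : G.Colorable 2) :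
    (Nat.card (G.Coloring (Fin q))) ^ (2 * d) ≤
      (Nat.card ((completeBipartiteGraph (Fin d) (Fin d)).Coloring (Fin q))) ^ n :=
  colorings_le_Kdd_general d n q hq G hreg hbip
end
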